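/- arXiv:2605.00209 — 9 statements merged into one kernel-verified Lean document; each statement's English description precedes it below -/
import Mathlib

section
/- Let a, σ ≥ 1 be integers, let n = 2a + σ, and let G be the simple graph on the disjoint union V = A ⊎ S ⊎ B with |A| = |B| = a and |S| = σ, whose edges are exactly all pairs of distinct vertices inside A ∪ S together with all pairs of distinct vertices inside B ∪ S. Set s = a + σ. Then (i) G admits a replicated bipartition with bound s of cost 0, and (ii) every non-replicating bipartition of G with bound s has cost at least σ·a/2. -/
open Finset

/-- The cost of a (possibly replicated) bipartition `(V1, V2)` of the vertex set of a simple
graph `G`: the number of edges of `G` having one endpoint in `V1 \ V2` and the other in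
`V2 \ V1`. -/
def repCost {V : Type*} [Fintype V] [DecidableEq V] (G : SimpleGraph V) [DecidableRel G.Adj]
    (V1 V2 : Finset V) : ℕ :=
  (G.edgeFinset.filter (fun e => ∃ a ∈ V1 \ V2, ∃ b ∈ V2 \ V1, e = s(a, b))).card

/-- Let `a, σ ≥ 1`, `n = 2a + σ`, and let `G` be the graph on the disjoint union
`V = A ⊎ S ⊎ B` with `|A| = |B| = a`, `|S| = σ`, whose edges are exactly all pairs of distinct
vertices inside `A ∪ S` together with all pairs of distinct vertices inside `B ∪ S`.
Set `s = a + σ`. Then (i) `G` admits a replicated bipartition with bound `s` of cost `0`,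
and (ii) every non-replicating bipartition of `G` with bound `s` has cost at least `σ·a/2`. -/
theorem stmt0 {V : Type*} [Fintype V] [DecidableEq V]
    (a σ : ℕ) (ha : 1 ≤ a) (hσ : 1 ≤ σ)
    (A S B : Finset V)
    (hAS : Disjoint A S) (hAB : Disjoint A B) (hSB : Disjoint S B)
    (hcover : A ∪ S ∪ B = Finset.univ)
    (hA : A.card = a) (hB : B.card = a) (hS : S.card = σ)
    (hn : Fintype.card V = 2 * a + σ)
    (G : SimpleGraph V) [DecidableRel G.Adj]
    (hG : ∀ x y : V, G.Adj x y ↔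
      x ≠ y ∧ ((x ∈ A ∪ S ∧ y ∈ A ∪ S) ∨ (x ∈ B ∪ S ∧ y ∈ B ∪ S))) :
    (∃ V1 V2 : Finset V, V1 ∪ V2 = Finset.univ ∧
      V1.card ≤ a + σ ∧ V2.card ≤ a + σ ∧ repCost G V1 V2 = 0) ∧
    (∀ V1 V2 : Finset V, V1 ∪ V2 = Finset.univ → Disjoint V1 V2 →
      V1.card ≤ a + σ → V2.card ≤ a + σ →
      (σ * a : ℝ) / 2 ≤ (repCost G V1 V2 : ℝ)) := by
  constructor
  · refine ⟨A ∪ S, S ∪ B, ?_, ?_, ?_, ?_⟩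
    · rw [← hcover]; ext x; simp [mem_union]
    · rw [card_union_of_disjoint hAS, hA, hS]
    · rw [card_union_of_disjoint hSB, hB, hS]; omega
    · rw [repCost, card_eq_zero, filter_eq_empty_iff]
      rintro e he ⟨x, hx, y, hy, rfl⟩
      simp only [mem_sdiff, mem_union] at hx hy
      rw [SimpleGraph.mem_edgeFinset, SimpleGraph.mem_edgeSet, hG] at he
      obtain ⟨-, hcase⟩ := he
      simp only [mem_union] at hcase
      tauto
  · intro V1 V2 hun hdisj h1 h2
    classical
    have hsum : V1.card + V2.card = 2 * a + σ := by
      rw [← card_union_of_disjoint hdisj, hun, card_univ, hn]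
    have hV1a : a ≤ V1.card := by omega
    have hV2a : a ≤ V2.card := by omega
    set s1 := (S ∩ V1).card with hs1
    set s2 := (S ∩ V2).card with hs2
    have hsσ : s1 + s2 = σ := by
      rw [hs1, hs2,
        ← card_union_of_disjoint (hdisj.mono inter_subset_right inter_subset_right),
        ← inter_union_distrib_left, hun, inter_univ, hS]
    set T : Finset (V × V) := ((S ∩ V1) ×ˢ V2) ∪ (V1 ×ˢ (S ∩ V2)) with hT
    have hTsub : T ⊆ V1 ×ˢ V2 :=
      union_subset (product_subset_product inter_subset_right (Subset.refl _))
        (product_subset_product (Subset.refl _) inter_subset_right)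
    have hinj : Set.InjOn (fun p : V × V => s(p.1, p.2)) ↑(V1 ×ˢ V2) := by
      rintro ⟨u, v⟩ hu ⟨u', v'⟩ hv h
      simp only [Finset.coe_product, Set.mem_prod, mem_coe] at hu hv
      simp only [Sym2.eq, Sym2.rel_iff', Prod.mk.injEq, Prod.swap_prod_mk] at h
      rcases h with ⟨rfl, rfl⟩ | ⟨rfl, rfl⟩
      · rfl
      · exact absurd hu.1 (fun hc => disjoint_left.mp hdisj hc hv.2)
    have himg : T.image (fun p : V × V => s(p.1, p.2)) ⊆
        G.edgeFinset.filter (fun e => ∃ a ∈ V1 \ V2, ∃ b ∈ V2 \ V1, e = s(a, b)) := by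
      intro e he
      simp only [mem_image] at he
      obtain ⟨⟨u, v⟩, hp, rfl⟩ := he
      have huv : u ∈ V1 ∧ v ∈ V2 := by
        have := hTsub hp
        simpa [mem_product] using this
      have hSuv : u ∈ S ∨ v ∈ S := by
        simp only [hT, mem_union, mem_product, mem_inter] at hp
        tauto
      have hne : u ≠ v := fun h => disjoint_left.mp hdisj huv.1 (h ▸ huv.2)
      refine mem_filter.mpr ⟨?_, u, ?_, v, ?_, rfl⟩
      · rw [SimpleGraph.mem_edgeFinset, SimpleGraph.mem_edgeSet, hG]
        refine ⟨hne, ?_⟩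
        have hu' : u ∈ A ∪ S ∪ B := by rw [hcover]; exact mem_univ u
        have hv' : v ∈ A ∪ S ∪ B := by rw [hcover]; exact mem_univ v
        simp only [mem_union] at hu' hv' ⊢
        tauto
      · exact mem_sdiff.mpr ⟨huv.1, fun h => disjoint_left.mp hdisj huv.1 h⟩
      · exact mem_sdiff.mpr ⟨huv.2, fun h => disjoint_left.mp hdisj h huv.2⟩
    have hcard1 : T.card ≤ repCost G V1 V2 := by
      rw [repCost]
      calc T.card = (T.image (fun p : V × V => s(p.1, p.2))).card :=
            (card_image_of_injOn (hinj.mono (coe_subset.mpr hTsub))).symm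
        _ ≤ _ := card_le_card himg
    have hint : ((S ∩ V1) ×ˢ V2) ∩ (V1 ×ˢ (S ∩ V2)) = (S ∩ V1) ×ˢ (S ∩ V2) := by
      ext ⟨u, v⟩
      simp only [mem_inter, mem_product]
      tauto
    have hTcard : T.card + s1 * s2 = s1 * V2.card + V1.card * s2 := by
      have h := card_union_add_card_inter ((S ∩ V1) ×ˢ V2) (V1 ×ˢ (S ∩ V2))
      rw [hint] at h
      simpa [hT, card_product, hs1, hs2] using h
    have hT'card : s1 * s2 ≤ T.card := by
      calc s1 * s2 = ((S ∩ V1) ×ˢ (S ∩ V2)).card := (card_product _ _).symm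
        _ ≤ T.card := card_le_card
            ((product_subset_product (Subset.refl _) inter_subset_right).trans
              subset_union_left)
    have key : σ * a ≤ 2 * repCost G V1 V2 := by
      have h3 : s1 * a + a * s2 ≤ s1 * V2.card + V1.card * s2 :=
        Nat.add_le_add (Nat.mul_le_mul_left _ hV2a) (Nat.mul_le_mul_right _ hV1a)
      calc σ * a = s1 * a + a * s2 := by rw [← hsσ]; ring
        _ ≤ s1 * V2.card + V1.card * s2 := h3
        _ = T.card + s1 * s2 := hTcard.symm
        _ ≤ T.card + T.card := by omega
        _ ≤ 2 * repCost G V1 V2 := by omega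
    rw [div_le_iff₀ (by norm_num : (0:ℝ) < 2)]
    have : ((σ * a : ℕ) : ℝ) ≤ ((2 * repCost G V1 V2 : ℕ) : ℝ) := by exact_mod_cast key
    push_cast at this ⊢
    linarith
end

section
/- Let H be a bipartite graph with parts X and Y, and let H' be the bipartite graph with parts X ∪ {v1} and Y ∪ {v2}, where v1, v2 are two new vertices, whose edge set consists of all edges of H together with all edges from v1 to every vertex of Y ∪ {v2} and all edges from v2 to every vertex of X ∪ {v1}. Then for every integer k ≥ 0, H' contains a balanced complete bipartite subgraph of size (k+1) + (k+1) if and only if H contains a balanced complete bipartite subgraph of size k + k. -/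
open Finset

/-!
Removing the two apex vertices `v1, v2` from a `(k+1)+(k+1)` biclique of `H'` (or any one vertex
from each side, if they are absent) leaves a `k+k` biclique inside `X × Y`, where `H'` agrees with
`H`. Conversely, `v1` and `v2` are adjacent to everything on the opposite side, so they extend any
`k+k` biclique of `H` to a `(k+1)+(k+1)` biclique of `H'`.
-/

theorem Finset.exists_subset_card_eq_of_subset_insert {α : Type*} [DecidableEq α]
    {s t : Finset α} {a : α} {k : ℕ} (hs : s ⊆ insert a t) (hcard : #s = k + 1) :
    ∃ u ⊆ s, u ⊆ t ∧ #u = k := by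
  have hk : k ≤ #(s.erase a) := by
    have := pred_card_le_card_erase (s := s) (a := a)
    omega
  obtain ⟨u, hu, hcard_u⟩ := exists_subset_card_eq hk
  exact ⟨u, hu.trans (erase_subset a s), hu.trans (subset_insert_iff.mp hs), hcard_u⟩

section ApexExtension

variable {V : Type*} [DecidableEq V] {X Y : Finset V} {v1 v2 : V} {H H' : SimpleGraph V}

theorem apexExtension_adj_iff
    (hH' : ∀ x y : V, H'.Adj x y ↔ H.Adj x y ∨
      (x = v1 ∧ y ∈ insert v2 Y) ∨ (y = v1 ∧ x ∈ insert v2 Y) ∨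
      (x = v2 ∧ y ∈ insert v1 X) ∨ (y = v2 ∧ x ∈ insert v1 X))
    (hv1 : v1 ∉ X ∪ Y) (hv2 : v2 ∉ X ∪ Y) {a b : V} (ha : a ∈ X ∪ Y) (hb : b ∈ X ∪ Y) :
    H'.Adj a b ↔ H.Adj a b := by
  rw [hH']
  constructor
  · rintro (h | ⟨rfl, -⟩ | ⟨rfl, -⟩ | ⟨rfl, -⟩ | ⟨rfl, -⟩)
    exacts [h, absurd ha hv1, absurd hb hv1, absurd ha hv2, absurd hb hv2]
  · exact Or.inl

theorem apexExtension_isCompleteBetween_insert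
    (hH' : ∀ x y : V, H'.Adj x y ↔ H.Adj x y ∨
      (x = v1 ∧ y ∈ insert v2 Y) ∨ (y = v1 ∧ x ∈ insert v2 Y) ∨
      (x = v2 ∧ y ∈ insert v1 X) ∨ (y = v2 ∧ x ∈ insert v1 X))
    {A B : Finset V} (hA : A ⊆ X) (hB : B ⊆ Y) (hAB : H.IsCompleteBetween A B) :
    H'.IsCompleteBetween ↑(insert v1 A) ↑(insert v2 B) := by
  intro a ha b hb
  rw [hH']
  rcases mem_insert.mp ha with rfl | ha
  · exact Or.inr <| Or.inl ⟨rfl, insert_subset_insert v2 hB hb⟩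
  rcases mem_insert.mp hb with rfl | hb
  · exact Or.inr <| Or.inr <| Or.inr <| Or.inr ⟨rfl, mem_insert_of_mem (hA ha)⟩
  · exact Or.inl (hAB ha hb)

end ApexExtension

theorem stmt4_general {V : Type*} [DecidableEq V]
    (X Y : Finset V)
    (v1 v2 : V) (hv1 : v1 ∉ X ∪ Y) (hv2 : v2 ∉ X ∪ Y)
    (H H' : SimpleGraph V)
    (hH' : ∀ x y : V, H'.Adj x y ↔ H.Adj x y ∨
      (x = v1 ∧ y ∈ insert v2 Y) ∨ (y = v1 ∧ x ∈ insert v2 Y) ∨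
      (x = v2 ∧ y ∈ insert v1 X) ∨ (y = v2 ∧ x ∈ insert v1 X))
    (k : ℕ) :
    (∃ A B : Finset V, A ⊆ insert v1 X ∧ B ⊆ insert v2 Y ∧
      A.card = k + 1 ∧ B.card = k + 1 ∧ ∀ a ∈ A, ∀ b ∈ B, H'.Adj a b) ↔
    (∃ A B : Finset V, A ⊆ X ∧ B ⊆ Y ∧ A.card = k ∧ B.card = k ∧
      ∀ a ∈ A, ∀ b ∈ B, H.Adj a b) := by
  constructor
  · rintro ⟨A, B, hA, hB, hAcard, hBcard, hAB⟩
    obtain ⟨A', hA'A, hA'X, hA'card⟩ := exists_subset_card_eq_of_subset_insert hA hAcard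
    obtain ⟨B', hB'B, hB'Y, hB'card⟩ := exists_subset_card_eq_of_subset_insert hB hBcard
    refine ⟨A', B', hA'X, hB'Y, hA'card, hB'card, fun a ha b hb => ?_⟩
    exact (apexExtension_adj_iff hH' hv1 hv2 (mem_union_left Y (hA'X ha))
      (mem_union_right X (hB'Y hb))).mp (hAB a (hA'A ha) b (hB'B hb))
  · rintro ⟨A, B, hA, hB, hAcard, hBcard, hAB⟩
    have hv1A : v1 ∉ A := fun h => hv1 (mem_union_left Y (hA h))
    have hv2B : v2 ∉ B := fun h => hv2 (mem_union_right X (hB h))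
    exact ⟨insert v1 A, insert v2 B, insert_subset_insert v1 hA, insert_subset_insert v2 hB,
      by rw [card_insert_of_notMem hv1A, hAcard], by rw [card_insert_of_notMem hv2B, hBcard],
      fun a ha b hb => apexExtension_isCompleteBetween_insert hH' hA hB hAB ha hb⟩

/-- Let `H` be a bipartite graph with parts `X` and `Y`, and let `H'` be the
bipartite graph with parts `X ∪ {v1}` and `Y ∪ {v2}`, where `v1, v2` are two new vertices,
whose edge set consists of all edges of `H` together with all edges from `v1` to every vertex
of `Y ∪ {v2}` and all edges from `v2` to every vertex of `X ∪ {v1}`. Then for every integer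
`k ≥ 0`, `H'` contains a balanced complete bipartite subgraph of size `(k+1) + (k+1)` if and
only if `H` contains a balanced complete bipartite subgraph of size `k + k`. -/
theorem stmt4 {V : Type*} [DecidableEq V]
    (X Y : Finset V) (hXY : Disjoint X Y)
    (v1 v2 : V) (hv1 : v1 ∉ X ∪ Y) (hv2 : v2 ∉ X ∪ Y) (hv12 : v1 ≠ v2)
    (H H' : SimpleGraph V)
    (hbip : ∀ x y : V, H.Adj x y → (x ∈ X ∧ y ∈ Y) ∨ (x ∈ Y ∧ y ∈ X))
    (hH' : ∀ x y : V, H'.Adj x y ↔ H.Adj x y ∨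
      (x = v1 ∧ y ∈ insert v2 Y) ∨ (y = v1 ∧ x ∈ insert v2 Y) ∨
      (x = v2 ∧ y ∈ insert v1 X) ∨ (y = v2 ∧ x ∈ insert v1 X))
    (k : ℕ) :
    (∃ A B : Finset V, A ⊆ insert v1 X ∧ B ⊆ insert v2 Y ∧
      A.card = k + 1 ∧ B.card = k + 1 ∧ ∀ a ∈ A, ∀ b ∈ B, H'.Adj a b) ↔
    (∃ A B : Finset V, A ⊆ X ∧ B ⊆ Y ∧ A.card = k ∧ B.card = k ∧
      ∀ a ∈ A, ∀ b ∈ B, H.Adj a b) :=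
  stmt4_general X Y v1 v2 hv1 hv2 H H' hH' k
end

section
/- Let G be a finite simple graph on a vertex set W with |W| = N, let m ≥ 1 be an integer, and let s be an integer with N ≤ 2s. Then G admits a replicated bipartition with bound s of cost 0 if and only if the m-blowup of G admits a replicated bipartition with bound s·m of cost 0. -/
open Finset

/-- The `m`-blowup of a simple graph `G` on `W`: the graph on `W × Fin m` where `(u, i)` and
`(v, j)` are adjacent iff either `u = v` and `i ≠ j`, or `u` and `v` are adjacent in `G`. -/
def blowup {W : Type*} (G : SimpleGraph W) (m : ℕ) : SimpleGraph (W × Fin m) where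
  Adj x y := (x.1 = y.1 ∧ x.2 ≠ y.2) ∨ G.Adj x.1 y.1
  symm := by
    constructor
    intro x y h
    rcases h with ⟨h1, h2⟩ | h
    · exact Or.inl ⟨h1.symm, h2.symm⟩
    · exact Or.inr h.symm
  loopless := by
    constructor
    intro x h
    rcases h with ⟨_, h2⟩ | h
    · exact h2 rfl
    · exact G.loopless.irrefl _ h

instance {W : Type*} [DecidableEq W] (G : SimpleGraph W) [DecidableRel G.Adj] (m : ℕ) :
    DecidableRel (blowup G m).Adj :=
  fun x y => inferInstanceAs (Decidable ((x.1 = y.1 ∧ x.2 ≠ y.2) ∨ G.Adj x.1 y.1))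

/-!
Blowing up a zero-cost bipartition `(V₁, V₂)` of `G` to `(V₁ × [m], V₂ × [m])` gives a
zero-cost bipartition of the blowup. Conversely, a clique `C_u` of the blowup cannot contain
both a vertex outside `V₁` and a vertex outside `V₂`, since these would form a cut edge; so
every clique lies entirely in `V₁` or entirely in `V₂`, and the vertices `u` whose clique lies in
`Vᵢ` form a zero-cost bipartition of `G` with `|Uᵢ| · m ≤ |Vᵢ|`.
-/

lemma repCost_eq_zero_iff {V : Type*} [Fintype V] [DecidableEq V] (G : SimpleGraph V)
    [DecidableRel G.Adj] (V1 V2 : Finset V) :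
    repCost G V1 V2 = 0 ↔ ∀ a ∈ V1 \ V2, ∀ b ∈ V2 \ V1, ¬ G.Adj a b := by
  rw [repCost, card_eq_zero, filter_eq_empty_iff]
  constructor
  · intro h a ha b hb hadj
    exact h (G.mem_edgeFinset.2 hadj) ⟨a, ha, b, hb, rfl⟩
  · rintro h e he ⟨a, ha, b, hb, rfl⟩
    exact h a ha b hb (G.mem_edgeFinset.1 he)

section FullFibres

variable {α β : Type*} [Fintype α] [Fintype β] [DecidableEq α] [DecidableEq β]

def fullFibres (S : Finset (α × β)) : Finset α :=
  univ.filter fun u => ∀ i, (u, i) ∈ S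

@[simp]
lemma mem_fullFibres {S : Finset (α × β)} {u : α} : u ∈ fullFibres S ↔ ∀ i, (u, i) ∈ S := by
  simp [fullFibres]

lemma card_fullFibres_mul_le (S : Finset (α × β)) :
    #(fullFibres S) * Fintype.card β ≤ #S := by
  rw [← card_univ, ← card_product]
  exact card_le_card fun x hx => mem_fullFibres.1 (mem_product.1 hx).1 x.2

end FullFibres

section Blowup

variable {W : Type*} [Fintype W] [DecidableEq W] (G : SimpleGraph W) [DecidableRel G.Adj]
  {m : ℕ}

lemma repCost_blowup_product_eq_zero {V1 V2 : Finset W} (hc : repCost G V1 V2 = 0) :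
    repCost (blowup G m) (V1 ×ˢ univ) (V2 ×ˢ univ) = 0 := by
  rw [repCost_eq_zero_iff] at hc ⊢
  rintro ⟨a, i⟩ ha ⟨b, j⟩ hb hadj
  simp only [mem_sdiff, mem_product, mem_univ, and_true] at ha hb
  rcases hadj with ⟨hab, -⟩ | hadj
  · obtain rfl : a = b := hab
    exact hb.2 ha.1
  · exact hc a (mem_sdiff.2 ha) b (mem_sdiff.2 hb) hadj

variable {G}

lemma fullFibres_union_eq_univ {V1 V2 : Finset (W × Fin m)} (hU : V1 ∪ V2 = univ)
    (hc : repCost (blowup G m) V1 V2 = 0) : fullFibres V1 ∪ fullFibres V2 = univ := by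
  rw [repCost_eq_zero_iff] at hc
  refine eq_univ_of_forall fun u => ?_
  by_contra hu
  simp only [mem_union, mem_fullFibres, not_or, not_forall] at hu
  obtain ⟨⟨i, hi⟩, ⟨j, hj⟩⟩ := hu
  have hcover (x : W × Fin m) : x ∈ V1 ∪ V2 := hU ▸ mem_univ x
  have hj1 : (u, j) ∈ V1 := (mem_union.1 (hcover _)).resolve_right hj
  have hi2 : (u, i) ∈ V2 := (mem_union.1 (hcover _)).resolve_left hi
  have hji : j ≠ i := by
    rintro rfl
    exact hi hj1
  exact hc (u, j) (mem_sdiff.2 ⟨hj1, hj⟩) (u, i) (mem_sdiff.2 ⟨hi2, hi⟩) (Or.inl ⟨rfl, hji⟩)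

lemma repCost_fullFibres_eq_zero {V1 V2 : Finset (W × Fin m)}
    (hc : repCost (blowup G m) V1 V2 = 0) : repCost G (fullFibres V1) (fullFibres V2) = 0 := by
  rw [repCost_eq_zero_iff] at hc ⊢
  intro a ha b hb hadj
  simp only [mem_sdiff, mem_fullFibres, not_forall] at ha hb
  obtain ⟨ha1, j, hj⟩ := ha
  obtain ⟨hb2, i, hi⟩ := hb
  exact hc (a, j) (mem_sdiff.2 ⟨ha1 j, hj⟩) (b, i) (mem_sdiff.2 ⟨hb2 i, hi⟩) (Or.inr hadj)

end Blowup

theorem stmt5_general {W : Type*} [Fintype W] [DecidableEq W]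
    (G : SimpleGraph W) [DecidableRel G.Adj]
    (m s : ℕ) (hm : 1 ≤ m) :
    (∃ V1 V2 : Finset W, V1 ∪ V2 = Finset.univ ∧
      V1.card ≤ s ∧ V2.card ≤ s ∧ repCost G V1 V2 = 0) ↔
    (∃ V1 V2 : Finset (W × Fin m), V1 ∪ V2 = Finset.univ ∧
      V1.card ≤ s * m ∧ V2.card ≤ s * m ∧ repCost (blowup G m) V1 V2 = 0) := by
  constructor
  · rintro ⟨V1, V2, hU, h1, h2, hc⟩
    refine ⟨V1 ×ˢ univ, V2 ×ˢ univ, ?_, ?_, ?_, repCost_blowup_product_eq_zero G hc⟩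
    · rw [← union_product, hU, univ_product_univ]
    · simpa using Nat.mul_le_mul_right m h1
    · simpa using Nat.mul_le_mul_right m h2
  · rintro ⟨V1, V2, hU, h1, h2, hc⟩
    have hcard (S : Finset (W × Fin m)) (hS : #S ≤ s * m) : #(fullFibres S) ≤ s :=
      Nat.le_of_mul_le_mul_right
        ((Fintype.card_fin m ▸ card_fullFibres_mul_le S).trans hS) hm
    exact ⟨fullFibres V1, fullFibres V2, fullFibres_union_eq_univ hU hc, hcard V1 h1,
      hcard V2 h2, repCost_fullFibres_eq_zero hc⟩

/-- Let `G` be a finite simple graph on a vertex set `W` with `|W| = N`, let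
`m ≥ 1` be an integer, and let `s` be an integer with `N ≤ 2s`. Then `G` admits a replicated
bipartition with bound `s` of cost `0` if and only if the `m`-blowup of `G` admits a replicated
bipartition with bound `s·m` of cost `0`. -/
theorem stmt5 {W : Type*} [Fintype W] [DecidableEq W]
    (G : SimpleGraph W) [DecidableRel G.Adj]
    (N m s : ℕ) (hN : Fintype.card W = N) (hm : 1 ≤ m) (hs : N ≤ 2 * s) :
    (∃ V1 V2 : Finset W, V1 ∪ V2 = Finset.univ ∧
      V1.card ≤ s ∧ V2.card ≤ s ∧ repCost G V1 V2 = 0) ↔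
    (∃ V1 V2 : Finset (W × Fin m), V1 ∪ V2 = Finset.univ ∧
      V1.card ≤ s * m ∧ V2.card ≤ s * m ∧ repCost (blowup G m) V1 V2 = 0) :=
  stmt5_general G m s hm
end

section
/- Let G be a finite simple graph on a vertex set W, let m ≥ 1 be an integer, let G' be the m-blowup of G, and let V1, V2 ⊆ W × {1,…,m} satisfy V1 ∪ V2 = W × {1,…,m}. Suppose u, v ∈ W are distinct vertices such that both cliques C_u and C_v intersect both V1 ∖ V2 and V1 ∩ V2. Then there exist sets V1*, V2* with V1* ∪ V2* = W × {1,…,m}, |V1*| = |V1|, |V2*| = |V2|, such that the number of edges of G' between V1* ∖ V2* and V2* ∖ V1* is at most the number of edges of G' between V1 ∖ V2 and V2 ∖ V1, at least one of C_u, C_v does not intersect both V1* ∖ V2* and V1* ∩ V2*, every clique C_w with w ∉ {u, v} has the same intersection with each of V1* ∖ V2*, V2* ∖ V1*, V1* ∩ V2* as with V1 ∖ V2, V2 ∖ V1, V1 ∩ V2 respectively, and C_u, C_v have the same intersection with V2* ∖ V1* as with V2 ∖ V1. -/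
/-!
A vertex `x ∈ C_u ∩ V1` is not in `V2 \ V1`, so its neighbours there in the blowup are exactly
the `y` with `y.1 = u` or `G.Adj u y.1`; their number `d_u` depends only on `u`. Say
`d_v ≤ d_u`. Adding `k` vertices of `C_u ∩ (V1 \ V2)` to `V2` and removing `k` vertices of
`C_v ∩ (V1 ∩ V2)` from it leaves `V1`, `|V2|` and `V2 \ V1` unchanged and changes the cost by
`k (d_v - d_u) ≤ 0`. With `k = min |C_u ∩ (V1 \ V2)| |C_v ∩ (V1 ∩ V2)|` one of these two parts
is used up, so that clique is no longer split.
-/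

open Finset

/-- The clique of a vertex `u` in the `m`-blowup: the set `C_u = {u} × {1, …, m}`. -/
def cliqueOf {W : Type*} [Fintype W] [DecidableEq W] (m : ℕ) (u : W) : Finset (W × Fin m) :=
  Finset.univ.filter (fun x => x.1 = u)

lemma repCost_eq_sum_card_adj {V : Type*} [Fintype V] [DecidableEq V] (G : SimpleGraph V)
    [DecidableRel G.Adj] (V1 V2 : Finset V) :
    repCost G V1 V2 = ∑ x ∈ V1 \ V2, #{y ∈ V2 \ V1 | G.Adj x y} := by
  rw [← card_sigma, repCost]
  symm
  refine card_nbij (fun p => s(p.1, p.2)) ?_ ?_ ?_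
  · rintro ⟨x, y⟩ hp
    simp only [coe_sigma, Set.mem_sigma_iff, mem_coe, mem_filter] at hp
    simp only [coe_filter, Set.mem_ofPred_eq, SimpleGraph.mem_edgeFinset,
      SimpleGraph.mem_edgeSet]
    exact ⟨hp.2.2, x, hp.1, y, hp.2.1, rfl⟩
  · rintro ⟨x, y⟩ hp ⟨x', y'⟩ hp' h
    simp only [coe_sigma, Set.mem_sigma_iff, mem_coe, mem_filter, mem_sdiff] at hp hp'
    rcases Sym2.eq_iff.1 h with ⟨rfl, rfl⟩ | ⟨rfl, rfl⟩
    · rfl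
    · exact absurd hp'.2.1.1 hp.1.2
  · rintro e he
    simp only [coe_filter, Set.mem_ofPred_eq] at he
    obtain ⟨he, a, ha, b, hb, rfl⟩ := he
    exact ⟨⟨a, b⟩, by simp_all, rfl⟩

section Swap

variable {α : Type*} [DecidableEq α] {V1 V2 S T : Finset α}

lemma union_sdiff_sdiff_of_subset (hS : S ⊆ V1) (hT : T ⊆ V1) :
    ((V2 ∪ S) \ T) \ V1 = V2 \ V1 := by
  ext x
  have := @hS x
  have := @hT x
  simp only [mem_sdiff, mem_union]
  tauto

lemma sdiff_union_sdiff_of_subset (hT : T ⊆ V1) : V1 \ ((V2 ∪ S) \ T) = (V1 \ V2) \ S ∪ T := by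
  ext x
  have := @hT x
  simp only [mem_sdiff, mem_union]
  tauto

lemma inter_union_sdiff_of_subset (hS : S ⊆ V1) (hST : Disjoint S T) :
    V1 ∩ ((V2 ∪ S) \ T) = (V1 ∩ V2) \ T ∪ S := by
  ext x
  have := @hS x
  have : x ∈ S → x ∉ T := fun hx => disjoint_left.1 hST hx
  simp only [mem_sdiff, mem_union, mem_inter]
  tauto

lemma union_union_sdiff_of_subset (hS : S ⊆ V1) (hT : T ⊆ V1) :
    V1 ∪ ((V2 ∪ S) \ T) = V1 ∪ V2 := by
  ext x
  have := @hS x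
  have := @hT x
  simp only [mem_sdiff, mem_union]
  tauto

lemma card_union_sdiff_of_card_eq (hS : Disjoint V2 S) (hT : T ⊆ V2) (h : #S = #T) :
    #((V2 ∪ S) \ T) = #V2 := by
  rw [card_sdiff_of_subset (hT.trans subset_union_left), card_union_of_disjoint hS, h,
    Nat.add_sub_cancel]

lemma inter_sdiff_union_of_disjoint {C X : Finset α} (hS : Disjoint C S) (hT : Disjoint C T) :
    C ∩ (X \ S ∪ T) = C ∩ X := by
  ext x
  have : x ∈ C → x ∉ S := fun hx => disjoint_left.1 hS hx
  have : x ∈ C → x ∉ T := fun hx => disjoint_left.1 hT hx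
  simp only [mem_sdiff, mem_union, mem_inter]
  tauto

lemma inter_sdiff_inter_union_of_disjoint {C X : Finset α} (hT : Disjoint C T) :
    C ∩ (X \ (C ∩ X) ∪ T) = ∅ := by
  ext x
  have : x ∈ C → x ∉ T := fun hx => disjoint_left.1 hT hx
  simp only [mem_sdiff, mem_union, mem_inter, notMem_empty, iff_false]
  tauto

end Swap

lemma repCost_swap_add_sum {V : Type*} [Fintype V] [DecidableEq V] (G : SimpleGraph V)
    [DecidableRel G.Adj] {V1 V2 S T : Finset V} (hS : S ⊆ V1 \ V2) (hT : T ⊆ V1 ∩ V2) :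
    repCost G V1 ((V2 ∪ S) \ T) + ∑ x ∈ S, #{y ∈ V2 \ V1 | G.Adj x y} =
      repCost G V1 V2 + ∑ x ∈ T, #{y ∈ V2 \ V1 | G.Adj x y} := by
  have hS1 : S ⊆ V1 := hS.trans sdiff_subset
  have hT1 : T ⊆ V1 := hT.trans inter_subset_left
  have hdisj : Disjoint ((V1 \ V2) \ S) T :=
    disjoint_of_subset_right hT
      (disjoint_of_subset_left sdiff_subset (disjoint_sdiff_inter V1 V2))
  rw [repCost_eq_sum_card_adj, repCost_eq_sum_card_adj, union_sdiff_sdiff_of_subset hS1 hT1,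
    sdiff_union_sdiff_of_subset hT1, sum_union hdisj, add_right_comm, sum_sdiff hS]

section Blowup

variable {W : Type*} {m : ℕ}

lemma blowup_adj_iff_of_ne (G : SimpleGraph W) {x y : W × Fin m} (h : x ≠ y) :
    (blowup G m).Adj x y ↔ x.1 = y.1 ∨ G.Adj x.1 y.1 := by
  have : x.1 = y.1 → x.2 ≠ y.2 := fun h1 h2 => h (Prod.ext h1 h2)
  change (x.1 = y.1 ∧ x.2 ≠ y.2) ∨ G.Adj x.1 y.1 ↔ _
  tauto

lemma filter_blowup_adj_of_notMem [DecidableEq W] (G : SimpleGraph W) [DecidableRel G.Adj]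
    {s : Finset (W × Fin m)} {x : W × Fin m} (hx : x ∉ s) :
    {y ∈ s | (blowup G m).Adj x y} = {y ∈ s | x.1 = y.1 ∨ G.Adj x.1 y.1} :=
  filter_congr fun _ hy => blowup_adj_iff_of_ne G fun h => hx (h ▸ hy)

variable [Fintype W] [DecidableEq W]

lemma mem_cliqueOf {u : W} {x : W × Fin m} : x ∈ cliqueOf m u ↔ x.1 = u := by
  simp [cliqueOf]

lemma disjoint_cliqueOf {u v : W} (h : u ≠ v) : Disjoint (cliqueOf m u) (cliqueOf m v) :=
  disjoint_left.2 fun _ hu hv => h ((mem_cliqueOf.1 hu).symm.trans (mem_cliqueOf.1 hv))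

lemma sum_card_filter_blowup_adj {G : SimpleGraph W} [DecidableRel G.Adj] {a : W}
    {X s : Finset (W × Fin m)} (hXa : X ⊆ cliqueOf m a) (hXs : Disjoint X s) :
    ∑ x ∈ X, #{y ∈ s | (blowup G m).Adj x y} = #X * #{y ∈ s | a = y.1 ∨ G.Adj a y.1} :=
  sum_const_nat fun x hx => by
    rw [filter_blowup_adj_of_notMem G (disjoint_left.1 hXs hx), mem_cliqueOf.1 (hXa hx)]

end Blowup

section SplitReduction

variable {W : Type*} [Fintype W] [DecidableEq W] (G : SimpleGraph W) [DecidableRel G.Adj]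
  (m : ℕ)

def IsSplit (V1 V2 : Finset (W × Fin m)) (u : W) : Prop :=
  (cliqueOf m u ∩ (V1 \ V2)).Nonempty ∧ (cliqueOf m u ∩ (V1 ∩ V2)).Nonempty

def IsSplitReduction (V1 V2 : Finset (W × Fin m)) (u v : W) (W1 W2 : Finset (W × Fin m)) :
    Prop :=
  W1 ∪ W2 = univ ∧ #W1 = #V1 ∧ #W2 = #V2 ∧
    repCost (blowup G m) W1 W2 ≤ repCost (blowup G m) V1 V2 ∧
    (¬ IsSplit m W1 W2 u ∨ ¬ IsSplit m W1 W2 v) ∧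
    (∀ w : W, w ≠ u → w ≠ v →
      cliqueOf m w ∩ (W1 \ W2) = cliqueOf m w ∩ (V1 \ V2) ∧
      cliqueOf m w ∩ (W2 \ W1) = cliqueOf m w ∩ (V2 \ V1) ∧
      cliqueOf m w ∩ (W1 ∩ W2) = cliqueOf m w ∩ (V1 ∩ V2)) ∧
    cliqueOf m u ∩ (W2 \ W1) = cliqueOf m u ∩ (V2 \ V1) ∧
    cliqueOf m v ∩ (W2 \ W1) = cliqueOf m v ∩ (V2 \ V1)

variable {G m}

lemma IsSplitReduction.symm {V1 V2 W1 W2 : Finset (W × Fin m)} {u v : W}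
    (h : IsSplitReduction G m V1 V2 u v W1 W2) : IsSplitReduction G m V1 V2 v u W1 W2 :=
  let ⟨hcover, h1, h2, hcost, hsplit, hother, hu, hv⟩ := h
  ⟨hcover, h1, h2, hcost, hsplit.symm, fun w hwv hwu => hother w hwu hwv, hv, hu⟩

lemma exists_isSplitReduction_of_card_le {V1 V2 : Finset (W × Fin m)} (hcover : V1 ∪ V2 = univ)
    {u v : W} (huv : u ≠ v)
    (hle : #{y ∈ V2 \ V1 | v = y.1 ∨ G.Adj v y.1} ≤ #{y ∈ V2 \ V1 | u = y.1 ∨ G.Adj u y.1}) :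
    ∃ W1 W2, IsSplitReduction G m V1 V2 u v W1 W2 := by
  set A := cliqueOf m u ∩ (V1 \ V2)
  set D := cliqueOf m v ∩ (V1 ∩ V2)
  obtain ⟨S, hSA, hSk⟩ := exists_subset_card_eq (min_le_left #A #D)
  obtain ⟨T, hTD, hTk⟩ := exists_subset_card_eq (min_le_right #A #D)
  have hSu : S ⊆ cliqueOf m u := hSA.trans inter_subset_left
  have hTv : T ⊆ cliqueOf m v := hTD.trans inter_subset_left
  have hS : S ⊆ V1 \ V2 := hSA.trans inter_subset_right
  have hT : T ⊆ V1 ∩ V2 := hTD.trans inter_subset_right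
  have hS1 : S ⊆ V1 := hS.trans sdiff_subset
  have hT1 : T ⊆ V1 := hT.trans inter_subset_left
  have hST : Disjoint S T :=
    disjoint_of_subset_left hSu (disjoint_of_subset_right hTv (disjoint_cliqueOf huv))
  have hright : ((V2 ∪ S) \ T) \ V1 = V2 \ V1 := union_sdiff_sdiff_of_subset hS1 hT1
  have hleft : V1 \ ((V2 ∪ S) \ T) = (V1 \ V2) \ S ∪ T := sdiff_union_sdiff_of_subset hT1
  have hboth : V1 ∩ ((V2 ∪ S) \ T) = (V1 ∩ V2) \ T ∪ S :=
    inter_union_sdiff_of_subset hS1 hST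
  refine ⟨V1, (V2 ∪ S) \ T, ?cover, rfl, ?card, ?cost, ?split, ?other, by rw [hright],
    by rw [hright]⟩
  case cover => rw [union_union_sdiff_of_subset hS1 hT1, hcover]
  case card =>
    exact card_union_sdiff_of_card_eq (disjoint_of_subset_right hS disjoint_sdiff)
      (hT.trans inter_subset_right) (hSk.trans hTk.symm)
  case cost =>
    have hswap := repCost_swap_add_sum (blowup G m) hS hT
    rw [sum_card_filter_blowup_adj hSu (disjoint_of_subset_left hS1 disjoint_sdiff),
      sum_card_filter_blowup_adj hTv (disjoint_of_subset_left hT1 disjoint_sdiff), hSk, hTk]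
      at hswap
    have := Nat.mul_le_mul_left (min #A #D) hle
    omega
  case split =>
    rcases le_total #A #D with h | h
    · have hSA' : S = A := eq_of_subset_of_card_le hSA (by rw [hSk, min_eq_left h])
      refine Or.inl fun ⟨hne, _⟩ => ?_
      rw [hleft, hSA', inter_sdiff_inter_union_of_disjoint
        (disjoint_of_subset_right hTv (disjoint_cliqueOf huv))] at hne
      exact Finset.not_nonempty_empty hne
    · have hTD' : T = D := eq_of_subset_of_card_le hTD (by rw [hTk, min_eq_right h])
      refine Or.inr fun ⟨_, hne⟩ => ?_
      rw [hboth, hTD', inter_sdiff_inter_union_of_disjoint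
        (disjoint_of_subset_right hSu (disjoint_cliqueOf huv.symm))] at hne
      exact Finset.not_nonempty_empty hne
  case other =>
    intro w hwu hwv
    have hwS : Disjoint (cliqueOf m w) S := disjoint_of_subset_right hSu (disjoint_cliqueOf hwu)
    have hwT : Disjoint (cliqueOf m w) T := disjoint_of_subset_right hTv (disjoint_cliqueOf hwv)
    exact ⟨by rw [hleft, inter_sdiff_union_of_disjoint hwS hwT], by rw [hright],
      by rw [hboth, inter_sdiff_union_of_disjoint hwT hwS]⟩

end SplitReduction

theorem stmt7_general {W : Type*} [Fintype W] [DecidableEq W]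
    (G : SimpleGraph W) [DecidableRel G.Adj]
    (m : ℕ)
    (V1 V2 : Finset (W × Fin m)) (hcover : V1 ∪ V2 = Finset.univ)
    (u v : W) (huv : u ≠ v) :
    ∃ W1 W2 : Finset (W × Fin m),
      W1 ∪ W2 = Finset.univ ∧ W1.card = V1.card ∧ W2.card = V2.card ∧
      repCost (blowup G m) W1 W2 ≤ repCost (blowup G m) V1 V2 ∧
      (¬ ((cliqueOf m u ∩ (W1 \ W2)).Nonempty ∧ (cliqueOf m u ∩ (W1 ∩ W2)).Nonempty) ∨
       ¬ ((cliqueOf m v ∩ (W1 \ W2)).Nonempty ∧ (cliqueOf m v ∩ (W1 ∩ W2)).Nonempty)) ∧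
      (∀ w : W, w ≠ u → w ≠ v →
        cliqueOf m w ∩ (W1 \ W2) = cliqueOf m w ∩ (V1 \ V2) ∧
        cliqueOf m w ∩ (W2 \ W1) = cliqueOf m w ∩ (V2 \ V1) ∧
        cliqueOf m w ∩ (W1 ∩ W2) = cliqueOf m w ∩ (V1 ∩ V2)) ∧
      cliqueOf m u ∩ (W2 \ W1) = cliqueOf m u ∩ (V2 \ V1) ∧
      cliqueOf m v ∩ (W2 \ W1) = cliqueOf m v ∩ (V2 \ V1) := by
  rcases le_total #{y ∈ V2 \ V1 | v = y.1 ∨ G.Adj v y.1}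
      #{y ∈ V2 \ V1 | u = y.1 ∨ G.Adj u y.1} with h | h
  · exact exists_isSplitReduction_of_card_le hcover huv h
  · obtain ⟨W1, W2, hW⟩ := exists_isSplitReduction_of_card_le hcover huv.symm h
    exact ⟨W1, W2, hW.symm⟩

/-- Let `G` be a finite simple graph on a vertex set `W`, let `m ≥ 1`, let `G'`
be the `m`-blowup of `G`, and let `V1, V2 ⊆ W × {1,…,m}` satisfy `V1 ∪ V2 = W × {1,…,m}`.
Suppose `u, v ∈ W` are distinct vertices such that both cliques `C_u` and `C_v` intersect both
`V1 ∖ V2` and `V1 ∩ V2`. Then there exist sets `V1*, V2*` with `V1* ∪ V2* = W × {1,…,m}`,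
`|V1*| = |V1|`, `|V2*| = |V2|`, such that the number of edges of `G'` between `V1* ∖ V2*` and
`V2* ∖ V1*` is at most the number of edges of `G'` between `V1 ∖ V2` and `V2 ∖ V1`, at least
one of `C_u, C_v` does not intersect both `V1* ∖ V2*` and `V1* ∩ V2*`, every clique `C_w` with
`w ∉ {u, v}` has the same intersection with each of `V1* ∖ V2*`, `V2* ∖ V1*`, `V1* ∩ V2*` as
with `V1 ∖ V2`, `V2 ∖ V1`, `V1 ∩ V2` respectively, and `C_u, C_v` have the same intersection
with `V2* ∖ V1*` as with `V2 ∖ V1`. -/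
theorem stmt7 {W : Type*} [Fintype W] [DecidableEq W]
    (G : SimpleGraph W) [DecidableRel G.Adj]
    (m : ℕ) (hm : 1 ≤ m)
    (V1 V2 : Finset (W × Fin m)) (hcover : V1 ∪ V2 = Finset.univ)
    (u v : W) (huv : u ≠ v)
    (hu1 : (cliqueOf m u ∩ (V1 \ V2)).Nonempty) (hu2 : (cliqueOf m u ∩ (V1 ∩ V2)).Nonempty)
    (hv1 : (cliqueOf m v ∩ (V1 \ V2)).Nonempty) (hv2 : (cliqueOf m v ∩ (V1 ∩ V2)).Nonempty) :
    ∃ W1 W2 : Finset (W × Fin m),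
      W1 ∪ W2 = Finset.univ ∧ W1.card = V1.card ∧ W2.card = V2.card ∧
      repCost (blowup G m) W1 W2 ≤ repCost (blowup G m) V1 V2 ∧
      (¬ ((cliqueOf m u ∩ (W1 \ W2)).Nonempty ∧ (cliqueOf m u ∩ (W1 ∩ W2)).Nonempty) ∨
       ¬ ((cliqueOf m v ∩ (W1 \ W2)).Nonempty ∧ (cliqueOf m v ∩ (W1 ∩ W2)).Nonempty)) ∧
      (∀ w : W, w ≠ u → w ≠ v →
        cliqueOf m w ∩ (W1 \ W2) = cliqueOf m w ∩ (V1 \ V2) ∧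
        cliqueOf m w ∩ (W2 \ W1) = cliqueOf m w ∩ (V2 \ V1) ∧
        cliqueOf m w ∩ (W1 ∩ W2) = cliqueOf m w ∩ (V1 ∩ V2)) ∧
      cliqueOf m u ∩ (W2 \ W1) = cliqueOf m u ∩ (V2 \ V1) ∧
      cliqueOf m v ∩ (W2 \ W1) = cliqueOf m v ∩ (V2 \ V1) :=
  stmt7_general G m V1 V2 hcover u v huv
end

section
/- Let a valid BSP schedule of a finite directed acyclic graph G be given, and suppose a node v satisfies v ∈ V_{p,s} and v ∈ V_{p,s'} for the same processor p and supersteps s < s'. Then the schedule obtained by removing v from V_{p,s'} (leaving all other computation and communication sets unchanged) is also a valid BSP schedule, and its cost is at most the cost of the original schedule. -/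
open Finset

/-- A BSP schedule on node set `V` with `P` processors and `S` supersteps: computation sets
`V_{p,s} ⊆ V` and communication sets `Γ_{p,s} ⊆ V × {1,…,P}`. -/
structure BSPSchedule (V : Type*) (P S : ℕ) where
  comp : Fin P → Fin S → Finset V
  comm : Fin P → Fin S → Finset (V × Fin P)

namespace BSPSchedule

variable {V : Type*} {P S : ℕ}

/-- A node `v` is present on processor `p` in superstep `s` if `v ∈ V_{p,s'}` for some
`s' ≤ s`, or `(v, p) ∈ Γ_{p',s'}` for some `s' < s` and some `p' ≠ p`. -/
def present (sch : BSPSchedule V P S) (v : V) (p : Fin P) (s : Fin S) : Prop :=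
  (∃ s' ≤ s, v ∈ sch.comp p s') ∨
  (∃ s' < s, ∃ p', p' ≠ p ∧ (v, p) ∈ sch.comm p' s')

/-- Validity of a BSP schedule for the DAG with edge relation `E`:
(i) for every `v ∈ V_{p,s}`, every in-neighbor of `v` is present on `p` in superstep `s`;
(ii) for every `(v, p') ∈ Γ_{p,s}`, `v` is present on `p` in superstep `s`;
(iii) every node lies in some computation set. -/
def Valid (E : V → V → Prop) (sch : BSPSchedule V P S) : Prop :=
  (∀ p s, ∀ v ∈ sch.comp p s, ∀ u, E u v → sch.present u p s) ∧
  (∀ p s, ∀ x ∈ sch.comm p s, sch.present x.1 p s) ∧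
  (∀ v : V, ∃ p s, v ∈ sch.comp p s)

/-- The set `Γ'_{p,s} = {(v, p') : (v, p) ∈ Γ_{p',s}}` of values received by `p` in `s`. -/
def received [Fintype V] [DecidableEq V] (sch : BSPSchedule V P S)
    (p : Fin P) (s : Fin S) : Finset (V × Fin P) :=
  Finset.univ.filter (fun x => (x.1, p) ∈ sch.comm x.2 s)

/-- The BSP cost
`Σ_s ( max_p |V_{p,s}| + L + g · max_p max(|Γ_{p,s}|, |Γ'_{p,s}|) )`. -/
def cost [Fintype V] [DecidableEq V] (sch : BSPSchedule V P S) (g L : ℝ) : ℝ :=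
  ∑ s : Fin S,
    (((Finset.univ.sup fun p => (sch.comp p s).card : ℕ) : ℝ) + L +
      g * ((Finset.univ.sup fun p =>
        max (sch.comm p s).card (sch.received p s).card : ℕ) : ℝ))

/-- A schedule is non-replicating if the computation sets are pairwise disjoint. -/
def NonReplicating (sch : BSPSchedule V P S) : Prop :=
  ∀ p s p' s', (p, s) ≠ (p', s') → Disjoint (sch.comp p s) (sch.comp p' s')

end BSPSchedule

/-- Let a valid BSP schedule of a finite directed acyclic graph `G` be given, and
suppose a node `v` satisfies `v ∈ V_{p,s}` and `v ∈ V_{p,s'}` for the same processor `p` and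
supersteps `s < s'`. Then the schedule obtained by removing `v` from `V_{p,s'}` (leaving all
other computation and communication sets unchanged) is also a valid BSP schedule, and its cost
is at most the cost of the original schedule. -/
theorem stmt9 {V : Type*} [Fintype V] [DecidableEq V]
    (E : V → V → Prop) (hacyc : ∀ v : V, ¬ Relation.TransGen E v v)
    (P S : ℕ) (hP : 1 ≤ P) (hS : 1 ≤ S)
    (g L : ℝ) (hg : 0 ≤ g) (hL : 0 ≤ L)
    (sch : BSPSchedule V P S) (hvalid : sch.Valid E)
    (v : V) (p : Fin P) (s s' : Fin S) (hss : s < s')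
    (hv : v ∈ sch.comp p s) (hv' : v ∈ sch.comp p s') :
    BSPSchedule.Valid E
      ({ comp := fun q t => if q = p ∧ t = s' then (sch.comp q t).erase v else sch.comp q t,
         comm := sch.comm } : BSPSchedule V P S) ∧
    BSPSchedule.cost
      ({ comp := fun q t => if q = p ∧ t = s' then (sch.comp q t).erase v else sch.comp q t,
         comm := sch.comm } : BSPSchedule V P S) g L ≤ sch.cost g L := by
  
  set sch' : BSPSchedule V P S :=
    { comp := fun q t => if q = p ∧ t = s' then (sch.comp q t).erase v else sch.comp q t,
      comm := sch.comm } with hsch'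
  obtain ⟨h1, h2, h3⟩ := hvalid
  have hpres : ∀ u q t, sch.present u q t → sch'.present u q t := by
    intro u q t hpr
    rcases hpr with ⟨t', ht', hu⟩ | ⟨t', ht', p', hp', hu⟩
    · by_cases hc : q = p ∧ t' = s' ∧ u = v
      · obtain ⟨rfl, rfl, rfl⟩ := hc
        refine Or.inl ⟨s, le_trans (le_of_lt hss) ht', ?_⟩
        simp only [hsch']
        rw [if_neg (by simp [hss.ne])]
        exact hv
      · refine Or.inl ⟨t', ht', ?_⟩
        simp only [hsch']
        split
        · rename_i h
          refine Finset.mem_erase.mpr ⟨?_, hu⟩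
          intro he; exact hc ⟨h.1, h.2, he⟩
        · exact hu
    · exact Or.inr ⟨t', ht', p', hp', hu⟩
  have hsub : ∀ q t, sch'.comp q t ⊆ sch.comp q t := by
    intro q t
    simp only [hsch']
    split
    · exact Finset.erase_subset _ _
    · exact Finset.Subset.refl _
  constructor
  · refine ⟨?_, ?_, ?_⟩
    · intro q t w hw u hE
      exact hpres u q t (h1 q t w (hsub q t hw) u hE)
    · intro q t x hx
      exact hpres x.1 q t (h2 q t x hx)
    · intro w
      obtain ⟨q, t, hw⟩ := h3 w
      by_cases hc : q = p ∧ t = s' ∧ w = v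
      · refine ⟨p, s, ?_⟩
        simp only [hsch']
        rw [if_neg (by simp [hss.ne])]
        rw [hc.2.2]
        exact hv
      · refine ⟨q, t, ?_⟩
        simp only [hsch']
        split
        · rename_i h
          exact Finset.mem_erase.mpr ⟨fun he => hc ⟨h.1, h.2, he⟩, hw⟩
        · exact hw
  · unfold BSPSchedule.cost
    refine Finset.sum_le_sum fun t _ => ?_
    have hcomm : ∀ q, sch'.comm q t = sch.comm q t := fun q => rfl
    have hrecv : ∀ q, sch'.received q t = sch.received q t := fun q => rfl
    have hsup : (Finset.univ.sup fun q => (sch'.comp q t).card) ≤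
        (Finset.univ.sup fun q => (sch.comp q t).card) :=
      Finset.sup_mono_fun fun q _ => Finset.card_le_card (hsub q t)
    have : ((Finset.univ.sup fun q => (sch'.comp q t).card : ℕ) : ℝ) ≤
        ((Finset.univ.sup fun q => (sch.comp q t).card : ℕ) : ℝ) := by exact_mod_cast hsup
    simp only [hcomm, hrecv]
    linarith
end

section
/- For every valid BSP schedule of a finite directed acyclic graph G with parameters P, S, g, L, there exists a valid BSP schedule of G with the same parameters P, S, g, L whose cost is at most the cost of the given schedule and in which every node of out-degree 0 belongs to exactly one computation set V_{p,s} and occurs in no communication set Γ_{p,s}. -/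
open Finset

/-- For every valid BSP schedule of a finite directed acyclic graph `G` with
parameters `P, S, g, L`, there exists a valid BSP schedule of `G` with the same parameters
whose cost is at most the cost of the given schedule and in which every node of out-degree `0`
belongs to exactly one computation set `V_{p,s}` and occurs in no communication set
`Γ_{p,s}`. -/
theorem stmt10 {V : Type*} [Fintype V] [DecidableEq V]
    (E : V → V → Prop) (hacyc : ∀ v : V, ¬ Relation.TransGen E v v)
    (P S : ℕ) (hP : 1 ≤ P) (hS : 1 ≤ S)
    (g L : ℝ) (hg : 0 ≤ g) (hL : 0 ≤ L)
    (sch : BSPSchedule V P S) (hvalid : sch.Valid E) :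
    ∃ sch' : BSPSchedule V P S, sch'.Valid E ∧ sch'.cost g L ≤ sch.cost g L ∧
      ∀ v : V, (∀ w : V, ¬ E v w) →
        (∃! ps : Fin P × Fin S, v ∈ sch'.comp ps.1 ps.2) ∧
        (∀ p s p', (v, p') ∉ sch'.comm p s) := by
  classical
  obtain ⟨hv1, hv2, hv3⟩ := hvalid
  choose pf sf hf using hv3
  set sink : V → Prop := fun v => ∀ w, ¬ E v w with hsink
  refine ⟨⟨fun p s => (sch.comp p s).filter (fun v => ¬ sink v ∨ (p = pf v ∧ s = sf v)),
    fun p s => (sch.comm p s).filter (fun x => ¬ sink x.1)⟩, ?_, ?_, ?_⟩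
  · -- validity
    have hpres : ∀ u p s, ¬ sink u → sch.present u p s →
        BSPSchedule.present ⟨fun p s => (sch.comp p s).filter (fun v => ¬ sink v ∨ (p = pf v ∧ s = sf v)),
          fun p s => (sch.comm p s).filter (fun x => ¬ sink x.1)⟩ u p s := by
      intro u p s hns hpr
      rcases hpr with ⟨s', hs', hm⟩ | ⟨s', hs', p', hp', hm⟩
      · exact Or.inl ⟨s', hs', Finset.mem_filter.2 ⟨hm, Or.inl hns⟩⟩
      · exact Or.inr ⟨s', hs', p', hp', Finset.mem_filter.2 ⟨hm, hns⟩⟩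
    refine ⟨?_, ?_, ?_⟩
    · intro p s v hv u hE
      have hv' := Finset.mem_filter.1 hv
      have hnsu : ¬ sink u := fun h => h v hE
      exact hpres u p s hnsu (hv1 p s v hv'.1 u hE)
    · intro p s x hx
      have hx' := Finset.mem_filter.1 hx
      exact hpres x.1 p s hx'.2 (hv2 p s x hx'.1)
    · intro v
      refine ⟨pf v, sf v, Finset.mem_filter.2 ⟨hf v, ?_⟩⟩
      by_cases h : sink v
      · exact Or.inr ⟨rfl, rfl⟩
      · exact Or.inl h
  · -- cost
    unfold BSPSchedule.cost
    refine Finset.sum_le_sum fun s _ => ?_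
    have h1 : ((Finset.univ.sup (fun p =>
        ((sch.comp p s).filter (fun v => ¬ sink v ∨ (p = pf v ∧ s = sf v))).card) : ℕ) : ℝ)
        ≤ ((Finset.univ.sup fun p => (sch.comp p s).card : ℕ) : ℝ) := by
      exact_mod_cast Finset.sup_mono_fun fun p _ =>
        Finset.card_le_card (Finset.filter_subset _ _)
    have h2 : ((Finset.univ.sup (fun p => max
        ((sch.comm p s).filter (fun x => ¬ sink x.1)).card
        (BSPSchedule.received ⟨fun p s => (sch.comp p s).filter (fun v => ¬ sink v ∨ (p = pf v ∧ s = sf v)),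
          fun p s => (sch.comm p s).filter (fun x => ¬ sink x.1)⟩ p s).card) : ℕ) : ℝ)
        ≤ ((Finset.univ.sup fun p => max (sch.comm p s).card (sch.received p s).card : ℕ) : ℝ) := by
      have : ∀ p : Fin P, max
          ((sch.comm p s).filter (fun x => ¬ sink x.1)).card
          (BSPSchedule.received ⟨fun p s => (sch.comp p s).filter (fun v => ¬ sink v ∨ (p = pf v ∧ s = sf v)),
            fun p s => (sch.comm p s).filter (fun x => ¬ sink x.1)⟩ p s).card
          ≤ max (sch.comm p s).card (sch.received p s).card := by
        intro p
        apply max_le_max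
        · exact Finset.card_le_card (Finset.filter_subset _ _)
        · apply Finset.card_le_card
          intro x hx
          simp only [BSPSchedule.received, Finset.mem_filter, Finset.mem_univ, true_and] at hx ⊢
          exact hx.1
      exact_mod_cast Finset.sup_mono_fun fun p _ => this p
    have := mul_le_mul_of_nonneg_left h2 hg
    linarith
  · -- sinks
    intro v hsv
    have hsv' : sink v := hsv
    constructor
    · refine ⟨(pf v, sf v), Finset.mem_filter.2 ⟨hf v, Or.inr ⟨rfl, rfl⟩⟩, ?_⟩
      rintro ⟨p, s⟩ hm
      have := (Finset.mem_filter.1 hm).2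
      rcases this with h | ⟨h1, h2⟩
      · exact absurd hsv' h
      · exact Prod.ext h1 h2
    · intro p s p' hm
      exact (Finset.mem_filter.1 hm).2 hsv'
end

section
/- Let G be a finite directed acyclic graph in which every node has out-degree at most 1. Then for every valid BSP schedule of G with parameters P, S, g, L there exists a valid non-replicating BSP schedule of G with the same parameters P, S, g, L whose cost is at most the cost of the given schedule; in particular, for such DAGs the minimum cost over all valid BSP schedules equals the minimum cost over all valid non-replicating BSP schedules. -/
open Finset

/-! Since every node has at most one successor, the DAG is an in-forest. Processing it from the
sinks backwards, pick for every node `v` one computation of it in the given schedule, chosen so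
that for the successor `w` of `v` the picked copy of `v` reaches the picked computation of `w`:
the presence of `v` where `w` is computed traces back through communications to some
computation of `v`. Keeping only the picked computations and the communications that forward
picked copies yields a valid non-replicating schedule whose computation and communication sets
are subsets of the original ones, hence whose cost is no larger. -/

open Relation

theorem wellFounded_flip_of_acyclic {α : Type*} [Finite α] {E : α → α → Prop}
    (hacyc : ∀ v, ¬ TransGen E v v) : WellFounded (flip E) := by
  have : IsTrans α (TransGen (flip E)) := ⟨fun _ _ _ => TransGen.trans⟩
  have : Std.Irrefl (TransGen (flip E)) := ⟨fun a ha => hacyc a (transGen_swap.1 ha)⟩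
  exact (Finite.wellFounded_of_trans_of_irrefl _).mono fun _ _ => TransGen.single

theorem exists_label_of_functional {α β : Type*} {E : α → α → Prop} (hwf : WellFounded (flip E))
    (hfun : ∀ u v w, E u v → E u w → v = w) (A : α → β → Prop) (C : α → β → β → Prop)
    (hroot : ∀ u, ∃ b, A u b) (hstep : ∀ u v b, E u v → A v b → ∃ a, A u a ∧ C u a b) :
    ∃ c : α → β, (∀ u, A u (c u)) ∧ ∀ u v, E u v → C u (c u) (c v) := by
  classical
  let F (u : α) (ih : ∀ v, flip E v u → {b // A v b}) : {b // A u b} :=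
    if h : ∃ v, E u v then
      have hpull := hstep u _ _ h.choose_spec (ih _ h.choose_spec).2
      ⟨hpull.choose, hpull.choose_spec.1⟩
    else ⟨(hroot u).choose, (hroot u).choose_spec⟩
  refine ⟨fun u => (hwf.fix F u).1, fun u => (hwf.fix F u).2, fun u v huv => ?_⟩
  have h : ∃ v, E u v := ⟨v, huv⟩
  obtain rfl := hfun u _ _ h.choose_spec huv
  show C u (hwf.fix F u).1 (hwf.fix F h.choose).1
  rw [hwf.fix_eq]
  simp only [F, dif_pos h]
  exact (hstep u _ _ h.choose_spec (hwf.fix F h.choose).2).choose_spec.2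

theorem sInf_setOf_eq_of_forall_exists_le {α : Type*} {f : α → ℝ} {p q : α → Prop}
    (hbdd : BddBelow (Set.range f)) (h : ∀ a, p a → ∃ b, p b ∧ q b ∧ f b ≤ f a) :
    sInf {x | ∃ a, p a ∧ f a = x} = sInf {x | ∃ a, p a ∧ q a ∧ f a = x} := by
  set A := {x | ∃ a, p a ∧ f a = x}
  set B := {x | ∃ a, p a ∧ q a ∧ f a = x}
  have hBA : B ⊆ A := by
    rintro _ ⟨a, ha, -, rfl⟩
    exact ⟨a, ha, rfl⟩
  have hbddA : BddBelow A := hbdd.mono <| by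
    rintro _ ⟨a, -, rfl⟩
    exact ⟨a, rfl⟩
  rcases Set.eq_empty_or_nonempty A with hA | ⟨_, a, ha, rfl⟩
  · rw [hA, Set.subset_empty_iff.1 (hBA.trans hA.subset)]
  obtain ⟨b, hb, hqb, -⟩ := h a ha
  refine le_antisymm (csInf_le_csInf hbddA ⟨f b, b, hb, hqb, rfl⟩ hBA)
    (le_csInf ⟨f a, a, ha, rfl⟩ ?_)
  rintro _ ⟨a, ha, rfl⟩
  obtain ⟨b, hb, hqb, hle⟩ := h a ha
  exact (csInf_le (hbddA.mono hBA) ⟨b, hb, hqb, rfl⟩).trans hle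

namespace BSPSchedule

variable {V : Type*} {P S : ℕ}

/-- `sch.ReachesFrom u src p s`: the copy of `u` computed at `src` is available on `p` in
superstep `s`, using only the communications of `sch`. -/
inductive ReachesFrom (sch : BSPSchedule V P S) (u : V) (src : Fin P × Fin S) :
    Fin P → Fin S → Prop
  | compute {s} : u ∈ sch.comp src.1 src.2 → src.2 ≤ s → ReachesFrom sch u src src.1 s
  | send {p p' s s'} : ReachesFrom sch u src p' s' → s' < s → p' ≠ p →
      (u, p) ∈ sch.comm p' s' → ReachesFrom sch u src p s

theorem ReachesFrom.mem_comp {sch : BSPSchedule V P S} {u : V} {src : Fin P × Fin S}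
    {p : Fin P} {s : Fin S} (h : sch.ReachesFrom u src p s) : u ∈ sch.comp src.1 src.2 := by
  induction h with
  | compute hu => exact hu
  | send _ _ _ _ ih => exact ih

theorem exists_reachesFrom_of_present {sch : BSPSchedule V P S}
    (hcomm : ∀ p s, ∀ x ∈ sch.comm p s, sch.present x.1 p s) {u : V} {p : Fin P} {s : Fin S}
    (h : sch.present u p s) : ∃ src, sch.ReachesFrom u src p s := by
  induction s using WellFoundedLT.induction generalizing p with
  | ind s ih =>
    rcases h with ⟨s', hs', hu⟩ | ⟨s', hs', p', hp', hx⟩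
    · exact ⟨(p, s'), .compute hu hs'⟩
    · obtain ⟨src, hsrc⟩ := ih s' hs' (hcomm p' s' _ hx)
      exact ⟨src, .send hsrc hs' hp' hx⟩

open Classical in
noncomputable def prune (sch : BSPSchedule V P S) (src : V → Fin P × Fin S) :
    BSPSchedule V P S where
  comp p s := {v ∈ sch.comp p s | src v = (p, s)}
  comm p s := {x ∈ sch.comm p s | sch.ReachesFrom x.1 (src x.1) p s}

section prune

variable {sch : BSPSchedule V P S} {src : V → Fin P × Fin S} {p : Fin P} {s : Fin S}

theorem mem_prune_comp {v : V} :
    v ∈ (sch.prune src).comp p s ↔ v ∈ sch.comp p s ∧ src v = (p, s) := by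
  unfold prune
  classical exact mem_filter

theorem mem_prune_comm {x : V × Fin P} :
    x ∈ (sch.prune src).comm p s ↔ x ∈ sch.comm p s ∧ sch.ReachesFrom x.1 (src x.1) p s := by
  unfold prune
  classical exact mem_filter

theorem prune_comp_subset (p : Fin P) (s : Fin S) : (sch.prune src).comp p s ⊆ sch.comp p s :=
  fun _ hv => (mem_prune_comp.1 hv).1

theorem prune_comm_subset (p : Fin P) (s : Fin S) : (sch.prune src).comm p s ⊆ sch.comm p s :=
  fun _ hx => (mem_prune_comm.1 hx).1

theorem ReachesFrom.present_prune {u : V}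
    (h : sch.ReachesFrom u (src u) p s) : (sch.prune src).present u p s := by
  induction h with
  | compute hu hs => exact .inl ⟨_, hs, mem_prune_comp.2 ⟨hu, rfl⟩⟩
  | send h hs hp hx _ => exact .inr ⟨_, hs, _, hp, mem_prune_comm.2 ⟨hx, h⟩⟩

theorem valid_prune {E : V → V → Prop} (hsrc : ∀ v, v ∈ sch.comp (src v).1 (src v).2)
    (hedge : ∀ u v, E u v → sch.ReachesFrom u (src u) (src v).1 (src v).2) :
    (sch.prune src).Valid E := by
  refine ⟨fun p s v hv u huv => ?_, fun p s x hx => ?_,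
    fun v => ⟨_, _, mem_prune_comp.2 ⟨hsrc v, rfl⟩⟩⟩
  · obtain ⟨-, hpick⟩ := mem_prune_comp.1 hv
    simpa [hpick] using (hedge u v huv).present_prune
  · exact (mem_prune_comm.1 hx).2.present_prune

theorem nonReplicating_prune : (sch.prune src).NonReplicating := by
  intro p s p' s' hne
  refine disjoint_left.2 fun v hv hv' => hne ?_
  rw [← (mem_prune_comp.1 hv).2, ← (mem_prune_comp.1 hv').2]

end prune

section cost

variable [Fintype V] [DecidableEq V]

theorem received_subset_received {sch' sch : BSPSchedule V P S}
    (hcomm : ∀ p s, sch'.comm p s ⊆ sch.comm p s) (p : Fin P) (s : Fin S) :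
    sch'.received p s ⊆ sch.received p s :=
  monotone_filter_right _ fun x _ hx => hcomm x.2 s hx

theorem cost_le_cost {sch' sch : BSPSchedule V P S} {g : ℝ} (hg : 0 ≤ g) (L : ℝ)
    (hcomp : ∀ p s, sch'.comp p s ⊆ sch.comp p s) (hcomm : ∀ p s, sch'.comm p s ⊆ sch.comm p s) :
    sch'.cost g L ≤ sch.cost g L := by
  refine sum_le_sum fun s _ => ?_
  gcongr with p
  exacts [hcomp p s, hcomm p s, received_subset_received hcomm p s]

theorem card_mul_le_cost (sch : BSPSchedule V P S) {g : ℝ} (hg : 0 ≤ g) (L : ℝ) :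
    S * L ≤ sch.cost g L :=
  calc (S : ℝ) * L = ∑ _s : Fin S, L := by simp
    _ ≤ sch.cost g L := sum_le_sum fun _ _ =>
      le_add_of_le_of_nonneg (le_add_of_nonneg_left (Nat.cast_nonneg _))
        (mul_nonneg hg (Nat.cast_nonneg _))

theorem exists_nonReplicating_cost_le {E : V → V → Prop} (hacyc : ∀ v, ¬ TransGen E v v)
    (hout : ∀ u v w, E u v → E u w → v = w) {g : ℝ} (hg : 0 ≤ g) (L : ℝ)
    {sch : BSPSchedule V P S} (hsch : sch.Valid E) :
    ∃ sch' : BSPSchedule V P S, sch'.Valid E ∧ sch'.NonReplicating ∧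
      sch'.cost g L ≤ sch.cost g L := by
  obtain ⟨hneeds, hcomm, hcover⟩ := hsch
  obtain ⟨src, hsrc, hedge⟩ := exists_label_of_functional (wellFounded_flip_of_acyclic hacyc) hout
    (fun v t => v ∈ sch.comp t.1 t.2) (fun u a b => sch.ReachesFrom u a b.1 b.2)
    (fun v => (hcover v).elim fun p ⟨s, hv⟩ => ⟨(p, s), hv⟩)
    fun u v t huv hv => by
      obtain ⟨a, ha⟩ := exists_reachesFrom_of_present hcomm (hneeds _ _ v hv u huv)
      exact ⟨a, ha.mem_comp, ha⟩
  exact ⟨sch.prune src, valid_prune hsrc hedge, nonReplicating_prune,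
    cost_le_cost hg L prune_comp_subset prune_comm_subset⟩

end cost

end BSPSchedule

theorem stmt11_general {V : Type*} [Fintype V] [DecidableEq V]
    (E : V → V → Prop) (hacyc : ∀ v : V, ¬ Relation.TransGen E v v)
    (hout : ∀ u v w : V, E u v → E u w → v = w)
    (P S : ℕ)
    (g L : ℝ) (hg : 0 ≤ g) :
    (∀ sch : BSPSchedule V P S, sch.Valid E →
      ∃ sch' : BSPSchedule V P S, sch'.Valid E ∧ sch'.NonReplicating ∧
        sch'.cost g L ≤ sch.cost g L) ∧
    sInf {x : ℝ | ∃ sch : BSPSchedule V P S, sch.Valid E ∧ sch.cost g L = x} =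
      sInf {x : ℝ | ∃ sch : BSPSchedule V P S,
        sch.Valid E ∧ sch.NonReplicating ∧ sch.cost g L = x} := by
  have hreduce := fun (sch : BSPSchedule V P S) (hsch : sch.Valid E) =>
    BSPSchedule.exists_nonReplicating_cost_le hacyc hout hg L hsch
  refine ⟨hreduce, sInf_setOf_eq_of_forall_exists_le ⟨S * L, ?_⟩ hreduce⟩
  rintro _ ⟨sch, rfl⟩
  exact sch.card_mul_le_cost hg L

/-- Let `G` be a finite directed acyclic graph in which every node has
out-degree at most `1`. Then for every valid BSP schedule of `G` with parameters `P, S, g, L`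
there exists a valid non-replicating BSP schedule of `G` with the same parameters whose cost is
at most the cost of the given schedule; in particular, for such DAGs the minimum cost over all
valid BSP schedules equals the minimum cost over all valid non-replicating BSP schedules. -/
theorem stmt11 {V : Type*} [Fintype V] [DecidableEq V]
    (E : V → V → Prop) (hacyc : ∀ v : V, ¬ Relation.TransGen E v v)
    (hout : ∀ u v w : V, E u v → E u w → v = w)
    (P S : ℕ) (hP : 1 ≤ P) (hS : 1 ≤ S)
    (g L : ℝ) (hg : 0 ≤ g) (hL : 0 ≤ L) :
    (∀ sch : BSPSchedule V P S, sch.Valid E →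
      ∃ sch' : BSPSchedule V P S, sch'.Valid E ∧ sch'.NonReplicating ∧
        sch'.cost g L ≤ sch.cost g L) ∧
    sInf {x : ℝ | ∃ sch : BSPSchedule V P S, sch.Valid E ∧ sch.cost g L = x} =
      sInf {x : ℝ | ∃ sch : BSPSchedule V P S,
        sch.Valid E ∧ sch.NonReplicating ∧ sch.cost g L = x} :=
  stmt11_general E hacyc hout P S g L hg
end

section
/- For all integers P ≥ 2, m ≥ 1, c ≥ 1 and all real parameters g, L with L ≥ 0 and g > P·(P·c + 1), every valid non-replicating BSP schedule of the DAG D(P, m, c) with P processors and any number of supersteps S ≥ 1 has cost at least (P·c + 1)·m, i.e., at least the total number of nodes of D(P, m, c). -/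
open Finset

/-- The node set of the DAG `D(P, m, c)`: the disjoint union of a set `U` with `|U| = m`
(the left summand) and sets `U_1, …, U_P` each with `|U_i| = c·m` (the right summand, where
`U_p = {p} × Fin (c·m)`). -/
abbrev DNode (P m c : ℕ) := Fin m ⊕ (Fin P × Fin (c * m))

/-- The edge relation of the DAG `D(P, m, c)`: exactly the pairs `(u, w)` for every `u ∈ U`
and every `w ∈ U_1 ∪ … ∪ U_P`. -/
def DEdge (P m c : ℕ) : DNode P m c → DNode P m c → Prop :=
  fun x y => x.isLeft = true ∧ y.isRight = true

/-- For all integers `P ≥ 2`, `m ≥ 1`, `c ≥ 1` and all real parameters `g, L`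
with `L ≥ 0` and `g > P·(P·c + 1)`, every valid non-replicating BSP schedule of the DAG
`D(P, m, c)` with `P` processors and any number of supersteps `S ≥ 1` has cost at least
`(P·c + 1)·m`, i.e., at least the total number of nodes of `D(P, m, c)`. -/
theorem stmt13 (P m c : ℕ) (hP : 2 ≤ P) (hm : 1 ≤ m) (hc : 1 ≤ c)
    (S : ℕ) (hS : 1 ≤ S) (g L : ℝ) (hL : 0 ≤ L)
    (hg : ((P * (P * c + 1) : ℕ) : ℝ) < g)
    (sch : BSPSchedule (DNode P m c) P S)
    (hvalid : sch.Valid (DEdge P m c)) (hnr : sch.NonReplicating) :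
    (((P * c + 1) * m : ℕ) : ℝ) ≤ sch.cost g L := by
  classical
  have hcm : 0 < c * m := Nat.mul_pos hc hm
  have hP0 : 0 < P := by omega
  -- abbreviations
  set a : Fin S → ℕ := fun s => Finset.univ.sup fun p => (sch.comp p s).card with ha
  set b : Fin S → ℕ := fun s => Finset.univ.sup fun p =>
    max (sch.comm p s).card (sch.received p s).card with hb
  have hg1 : (1:ℝ) ≤ g := by
    have h0 : (1:ℕ) ≤ P * (P * c + 1) := Nat.one_le_iff_ne_zero.mpr (by positivity)
    have h1 : ((1:ℕ):ℝ) ≤ ((P * (P * c + 1) : ℕ):ℝ) := by exact_mod_cast h0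
    push_cast at h1
    have hg' := hg
    push_cast at hg'
    linarith
  have hg2 : ((2 * (P * c + 1) : ℕ) : ℝ) ≤ g := by
    have h2 : (2 * (P * c + 1) : ℕ) ≤ P * (P * c + 1) :=
      Nat.mul_le_mul_right _ hP
    calc ((2 * (P * c + 1) : ℕ) : ℝ) ≤ ((P * (P * c + 1) : ℕ) : ℝ) := by exact_mod_cast h2
      _ ≤ g := le_of_lt hg
  -- cost lower bound
  have hcost : (∑ s, (a s : ℝ)) + g * (∑ s, (b s : ℝ)) ≤ sch.cost g L := by
    unfold BSPSchedule.cost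
    rw [Finset.mul_sum, ← Finset.sum_add_distrib]
    refine Finset.sum_le_sum fun s _ => ?_
    have : (0:ℝ) ≤ L := hL
    simp only [ha, hb]
    linarith
  have hale : ∀ p s, (sch.comp p s).card ≤ a s := fun p s =>
    Finset.le_sup (f := fun p => (sch.comp p s).card) (Finset.mem_univ p)
  have hble : ∀ p s, (sch.received p s).card ≤ b s := fun p s =>
    le_trans (le_max_right _ _)
      (Finset.le_sup (f := fun p => max (sch.comm p s).card (sch.received p s).card)
        (Finset.mem_univ p))
  -- received-nodes sets
  set R : Fin P → Finset (DNode P m c) := fun q =>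
    Finset.univ.biUnion (fun s => (sch.received q s).image Prod.fst) with hRdef
  have hRcard : ∀ q, ((R q).card : ℕ) ≤ ∑ s, (sch.received q s).card := by
    intro q
    refine le_trans Finset.card_biUnion_le (Finset.sum_le_sum fun s _ => ?_)
    exact Finset.card_image_le
  have hRmem : ∀ (v : DNode P m c) (q : Fin P) (s' : Fin S) (p' : Fin P),
      (v, q) ∈ sch.comm p' s' → v ∈ R q := by
    intro v q s' p' hmem
    refine Finset.mem_biUnion.mpr ⟨s', Finset.mem_univ _, ?_⟩
    exact Finset.mem_image.mpr ⟨(v, p'), by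
      simp [BSPSchedule.received, hmem], rfl⟩
  -- a witness sink
  obtain ⟨p0, s0, hw0⟩ := hvalid.2.2 (Sum.inr (⟨0, hP0⟩, ⟨0, hcm⟩))
  -- presence of all sources where a sink is computed
  have hsource : ∀ (u : Fin m) (p : Fin P) (s : Fin S) (w : Fin P × Fin (c * m)),
      Sum.inr w ∈ sch.comp p s →
      (∃ s', Sum.inl u ∈ sch.comp p s') ∨ Sum.inl u ∈ R p := by
    intro u p s w hw
    have := hvalid.1 p s (Sum.inr w) hw (Sum.inl u) ⟨rfl, rfl⟩
    rcases this with ⟨s', _, hmem⟩ | ⟨s', _, p', _, hmem⟩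
    · exact Or.inl ⟨s', hmem⟩
    · exact Or.inr (hRmem _ _ _ _ hmem)
  have key : (((P * c + 1) * m : ℕ) : ℝ) ≤
      (∑ s, (a s : ℝ)) + g * (∑ s, (b s : ℝ)) := by
    by_cases hall : ∀ (p : Fin P) (s : Fin S) (w : Fin P × Fin (c * m)),
        Sum.inr w ∈ sch.comp p s → p = p0
    · -- all sinks on p0
      set C : Finset (DNode P m c) := Finset.univ.biUnion (fun s => sch.comp p0 s) with hC
      have hcover : (Finset.univ : Finset (DNode P m c)) ⊆ C ∪ R p0 := by
        intro v _
        rcases v with u | w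
        · rcases hsource u p0 s0 _ hw0 with ⟨s', hs'⟩ | hR
          · exact Finset.mem_union_left _
              (Finset.mem_biUnion.mpr ⟨s', Finset.mem_univ _, hs'⟩)
          · exact Finset.mem_union_right _ hR
        · obtain ⟨p, s, hps⟩ := hvalid.2.2 (Sum.inr w)
          have := hall p s w hps
          subst this
          exact Finset.mem_union_left _
            (Finset.mem_biUnion.mpr ⟨s, Finset.mem_univ _, hps⟩)
      have hN : (P * c + 1) * m = Fintype.card (DNode P m c) := by
        simp [Fintype.card_sum, Fintype.card_prod]
        ring
      have hNle : (P * c + 1) * m ≤ (∑ s, a s) + (∑ s, b s) := by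
        calc (P * c + 1) * m = (Finset.univ : Finset (DNode P m c)).card := by
              rw [hN, Finset.card_univ]
          _ ≤ (C ∪ R p0).card := Finset.card_le_card hcover
          _ ≤ C.card + (R p0).card := Finset.card_union_le _ _
          _ ≤ (∑ s, (sch.comp p0 s).card) + (∑ s, (sch.received p0 s).card) :=
              Nat.add_le_add (le_trans Finset.card_biUnion_le le_rfl) (hRcard p0)
          _ ≤ (∑ s, a s) + (∑ s, b s) :=
              Nat.add_le_add (Finset.sum_le_sum fun s _ => hale p0 s)
                (Finset.sum_le_sum fun s _ => hble p0 s)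
      have hb0 : (0:ℝ) ≤ (∑ s, (b s : ℝ)) := by positivity
      have h1 : (∑ s, (b s : ℝ)) ≤ g * (∑ s, (b s : ℝ)) := by nlinarith
      have h2 : (((P * c + 1) * m : ℕ) : ℝ) ≤ (∑ s, (a s : ℝ)) + (∑ s, (b s : ℝ)) := by
        have := hNle
        push_cast
        exact_mod_cast (by exact_mod_cast this : (((P*c+1)*m : ℕ):ℝ) ≤ ((∑ s, a s) + (∑ s, b s) : ℕ))
      linarith
    · -- two distinct sink processors
      push_neg at hall
      obtain ⟨p1, s1, w1, hw1, hp1⟩ := hall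
      have hsub : (Finset.univ.image (Sum.inl : Fin m → DNode P m c)) ⊆ R p0 ∪ R p1 := by
        intro v hv
        obtain ⟨u, _, rfl⟩ := Finset.mem_image.mp hv
        rcases hsource u p0 s0 _ hw0 with ⟨t0, ht0⟩ | hR0
        · rcases hsource u p1 s1 _ hw1 with ⟨t1, ht1⟩ | hR1
          · exfalso
            have hne : ((p0 : Fin P), t0) ≠ (p1, t1) := by
              intro h; exact hp1 (by simpa using (Prod.ext_iff.mp h).1.symm)
            exact (Finset.disjoint_left.mp (hnr p0 t0 p1 t1 hne) ht0) ht1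
          · exact Finset.mem_union_right _ hR1
        · exact Finset.mem_union_left _ hR0
      have hmle : m ≤ (∑ s, b s) + (∑ s, b s) := by
        calc m = (Finset.univ.image (Sum.inl : Fin m → DNode P m c)).card := by
              rw [Finset.card_image_of_injective _ Sum.inl_injective, Finset.card_univ,
                Fintype.card_fin]
          _ ≤ (R p0 ∪ R p1).card := Finset.card_le_card hsub
          _ ≤ (R p0).card + (R p1).card := Finset.card_union_le _ _
          _ ≤ (∑ s, (sch.received p0 s).card) + (∑ s, (sch.received p1 s).card) :=
              Nat.add_le_add (hRcard p0) (hRcard p1)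
          _ ≤ (∑ s, b s) + (∑ s, b s) :=
              Nat.add_le_add (Finset.sum_le_sum fun s _ => hble p0 s)
                (Finset.sum_le_sum fun s _ => hble p1 s)
      have ha0 : (0:ℝ) ≤ (∑ s, (a s : ℝ)) := by positivity
      have hb0 : (0:ℝ) ≤ (∑ s, (b s : ℝ)) := by positivity
      have hmle' : (m : ℝ) ≤ 2 * (∑ s, (b s : ℝ)) := by
        have : ((m : ℕ) : ℝ) ≤ (((∑ s, b s) + (∑ s, b s) : ℕ) : ℝ) := by exact_mod_cast hmle
        push_cast at this
        linarith
      have hg2' : ((2:ℝ) * ((P:ℝ) * (c:ℝ) + 1)) ≤ g := by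
        have := hg2; push_cast at this; linarith
      have hPc0 : (0:ℝ) ≤ (P:ℝ) * (c:ℝ) + 1 := by positivity
      have h1 : (2 * ((P:ℝ) * c + 1)) * (∑ s, (b s : ℝ)) ≤ g * (∑ s, (b s : ℝ)) :=
        mul_le_mul_of_nonneg_right hg2' hb0
      have h2 : ((P:ℝ) * c + 1) * (m:ℝ) ≤ ((P:ℝ) * c + 1) * (2 * (∑ s, (b s : ℝ))) :=
        mul_le_mul_of_nonneg_left hmle' hPc0
      have : (((P * c + 1) * m : ℕ) : ℝ) ≤ g * (∑ s, (b s : ℝ)) := by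
        push_cast
        nlinarith
      linarith
  linarith
end

section
/- For all integers P ≥ 2, m ≥ 1, c ≥ 1, with parameters L = 0 and any real g > P·(P·c + 1), the minimum cost of a valid non-replicating BSP schedule of the DAG D(P, m, c) with P processors (over all numbers of supersteps S ≥ 1) is at least ((P·c + 1)/(c + 1)) times the minimum cost of a valid BSP schedule of D(P, m, c) with P processors (over all S ≥ 1); consequently, allowing replication reduces the optimal BSP cost of D(P, m, c) by a factor of at least (P·c + 1)/(c + 1). -/
open Finset

/-!
Replicating `U` on every processor gives a one-superstep schedule without communication in which
each processor computes `U ∪ U_p`, of cost `(c + 1)·m`. A non-replicating schedule costs at least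
`(P·c + 1)·m`: if a single processor computes all of `U_1 ∪ … ∪ U_P`, it computes `P·c·m` nodes
and must also compute or receive each `u ∈ U`, and receiving costs at least `g/P ≥ 1` per value;
otherwise two processors compute nodes of `U_1 ∪ … ∪ U_P`, both need all of `U`, and as `U` is not
replicated every `u ∈ U` is sent at least once, at a price `g/P > P·c + 1` per value.
-/

namespace BSPSchedule

variable {V : Type*} {P S : ℕ}

def sequential [Fintype V] (p₀ : Fin P) : BSPSchedule V P 1 where
  comp p _ := if p = p₀ then univ else ∅
  comm _ _ := ∅

theorem sequential_valid [Fintype V] (E : V → V → Prop) (p₀ : Fin P) :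
    (sequential p₀ : BSPSchedule V P 1).Valid E := by
  refine ⟨fun p s v hv u _ => Or.inl ⟨s, le_rfl, ?_⟩, fun _ _ _ hx => by simp [sequential] at hx,
    fun v => ⟨p₀, 0, by simp [sequential]⟩⟩
  by_cases hp : p = p₀ <;> simp_all [sequential]

theorem sequential_nonReplicating [Fintype V] (p₀ : Fin P) :
    (sequential p₀ : BSPSchedule V P 1).NonReplicating := by
  intro p s p' s' hne
  obtain rfl : s = s' := Subsingleton.elim s s'
  by_cases hp : p = p₀ <;> by_cases hp' : p' = p₀ <;> simp_all [sequential]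

section Computation

variable [DecidableEq V] (sch : BSPSchedule V P S)

def work : ℕ :=
  ∑ s, univ.sup fun p => (sch.comp p s).card

def computedOn (p : Fin P) : Finset V :=
  univ.biUnion (sch.comp p)

theorem card_computedOn_le_work (p : Fin P) : (sch.computedOn p).card ≤ sch.work :=
  card_biUnion_le.trans <|
    Finset.sum_le_sum fun s _ => Finset.le_sup (f := fun p => (sch.comp p s).card) (mem_univ p)

variable {sch}

theorem Valid.exists_mem_computedOn {E : V → V → Prop} (hval : sch.Valid E) (v : V) :
    ∃ p, v ∈ sch.computedOn p := by
  obtain ⟨p, s, hv⟩ := hval.2.2 v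
  exact ⟨p, mem_biUnion.mpr ⟨s, mem_univ _, hv⟩⟩

theorem NonReplicating.eq_of_mem_computedOn (hnr : sch.NonReplicating) {v : V} {p q : Fin P}
    (hp : v ∈ sch.computedOn p) (hq : v ∈ sch.computedOn q) : p = q := by
  obtain ⟨s, -, hp⟩ := mem_biUnion.mp hp
  obtain ⟨s', -, hq⟩ := mem_biUnion.mp hq
  by_contra hpq
  exact disjoint_left.mp (hnr p s q s' (by simp [hpq])) hp hq

end Computation

section Communication

variable [DecidableEq V] [Fintype V] (sch : BSPSchedule V P S)

def commCost : ℕ :=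
  ∑ s, univ.sup fun p => max (sch.comm p s).card (sch.received p s).card

theorem cost_zero_eq (g : ℝ) : sch.cost g 0 = sch.work + g * sch.commCost := by
  simp only [cost, work, commCost, add_zero, Nat.cast_sum, Finset.sum_add_distrib,
    Finset.mul_sum]

theorem cost_nonneg {g L : ℝ} (hg : 0 ≤ g) (hL : 0 ≤ L) : 0 ≤ sch.cost g L :=
  Finset.sum_nonneg fun _ _ => by positivity

def delivered : Finset (V × Fin P) :=
  univ.filter fun x => ∃ s p', (x.1, x.2) ∈ sch.comm p' s

theorem card_delivered_le : sch.delivered.card ≤ P * sch.commCost := by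
  have hsub : sch.delivered ⊆ (univ : Finset (Fin S × Fin P)).biUnion
      fun sp => (sch.received sp.2 sp.1).image fun x => (x.1, sp.2) := by
    intro x hx
    obtain ⟨s, p', hx⟩ := (mem_filter.mp hx).2
    exact mem_biUnion.mpr ⟨(s, x.2), mem_univ _,
      mem_image.mpr ⟨(x.1, p'), by simpa [received] using hx, rfl⟩⟩
  calc sch.delivered.card
      ≤ ∑ sp : Fin S × Fin P, (sch.received sp.2 sp.1).card :=
        (card_le_card hsub).trans <| card_biUnion_le.trans <|
          Finset.sum_le_sum fun _ _ => card_image_le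
    _ = ∑ s, ∑ p, (sch.received p s).card := Fintype.sum_prod_type _
    _ ≤ ∑ s, P * univ.sup fun p => max (sch.comm p s).card (sch.received p s).card := by
        refine Finset.sum_le_sum fun s _ => ?_
        simpa using Finset.sum_le_card_nsmul univ _ _ fun p hp =>
          (le_max_right _ _).trans
            (Finset.le_sup (f := fun p => max (sch.comm p s).card (sch.received p s).card) hp)
    _ = P * sch.commCost := by rw [commCost, Finset.mul_sum]

variable {sch}

theorem Valid.mem_computedOn_or_mem_delivered {E : V → V → Prop} (hval : sch.Valid E)
    {u v : V} {p : Fin P} (huv : E u v) (hv : v ∈ sch.computedOn p) :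
    u ∈ sch.computedOn p ∨ (u, p) ∈ sch.delivered := by
  obtain ⟨s, -, hv⟩ := mem_biUnion.mp hv
  rcases hval.1 p s v hv u huv with ⟨s', -, hu⟩ | ⟨s', -, p', -, hu⟩
  · exact Or.inl (mem_biUnion.mpr ⟨s', mem_univ _, hu⟩)
  · exact Or.inr (mem_filter.mpr ⟨mem_univ _, s', p', hu⟩)

end Communication

end BSPSchedule

namespace DNode

open BSPSchedule

variable {P m c S : ℕ} {sch : BSPSchedule (DNode P m c) P S}

theorem card_eq (P m c : ℕ) : Fintype.card (DNode P m c) = (P * c + 1) * m := by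
  simp only [Fintype.card_sum, Fintype.card_prod, Fintype.card_fin]
  ring

theorem inl_mem_computedOn_or_mem_delivered (hval : sch.Valid (DEdge P m c)) {p : Fin P}
    {w : Fin P × Fin (c * m)} (hw : Sum.inr w ∈ sch.computedOn p) (u : Fin m) :
    Sum.inl u ∈ sch.computedOn p ∨ (Sum.inl u, p) ∈ sch.delivered :=
  hval.mem_computedOn_or_mem_delivered ⟨rfl, rfl⟩ hw

theorem card_le_card_computedOn_add_card_delivered (hval : sch.Valid (DEdge P m c)) {p : Fin P}
    (hp : ∀ w, Sum.inr w ∈ sch.computedOn p) (w₀ : Fin P × Fin (c * m)) :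
    (P * c + 1) * m ≤ (sch.computedOn p).card + sch.delivered.card := by
  have hcover : (univ : Finset (DNode P m c)) ⊆
      sch.computedOn p ∪ sch.delivered.image Prod.fst := by
    rintro (u | w) -
    · rcases inl_mem_computedOn_or_mem_delivered hval (hp w₀) u with hu | hu
      · exact mem_union_left _ hu
      · exact mem_union_right _ (mem_image_of_mem _ hu)
    · exact mem_union_left _ (hp w)
  calc (P * c + 1) * m = (univ : Finset (DNode P m c)).card := by rw [card_univ, card_eq]
    _ ≤ _ := (card_le_card hcover).trans (card_union_le _ _)
    _ ≤ _ := Nat.add_le_add_left card_image_le _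

theorem le_card_delivered (hval : sch.Valid (DEdge P m c)) (hnr : sch.NonReplicating)
    {p q : Fin P} (hpq : p ≠ q) {w w' : Fin P × Fin (c * m)}
    (hw : Sum.inr w ∈ sch.computedOn p) (hw' : Sum.inr w' ∈ sch.computedOn q) :
    m ≤ sch.delivered.card := by
  have hcover : (univ : Finset (Fin m)).map Function.Embedding.inl ⊆
      sch.delivered.image Prod.fst := by
    intro x hx
    obtain ⟨u, -, rfl⟩ := mem_map.mp hx
    rcases inl_mem_computedOn_or_mem_delivered hval hw u with hp | hp
    · rcases inl_mem_computedOn_or_mem_delivered hval hw' u with hq | hq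
      · exact absurd (hnr.eq_of_mem_computedOn hp hq) hpq
      · exact mem_image_of_mem _ hq
    · exact mem_image_of_mem _ hp
  simpa using (card_le_card hcover).trans card_image_le

theorem cost_ge_of_nonReplicating (hP : 0 < P) (hm : 0 < m) (hc : 0 < c) {g : ℝ}
    (hg : ((P * (P * c + 1) : ℕ) : ℝ) ≤ g) (hval : sch.Valid (DEdge P m c))
    (hnr : sch.NonReplicating) :
    (((P * c + 1) * m : ℕ) : ℝ) ≤ sch.cost g 0 := by
  have hcomm := sch.card_delivered_le
  have hgP : (P : ℝ) ≤ g := le_trans (by exact_mod_cast Nat.le_mul_of_pos_right P (by omega)) hg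
  let w₀ : Fin P × Fin (c * m) := (⟨0, hP⟩, ⟨0, Nat.mul_pos hc hm⟩)
  obtain ⟨p, hp⟩ := hval.exists_mem_computedOn (Sum.inr w₀)
  rw [cost_zero_eq]
  by_cases hsplit : ∃ w q, q ≠ p ∧ Sum.inr w ∈ sch.computedOn q
  · obtain ⟨w, q, hqp, hq⟩ := hsplit
    have hm' : (m : ℝ) ≤ P * sch.commCost := by
      exact_mod_cast (le_card_delivered hval hnr hqp hq hp).trans hcomm
    calc (((P * c + 1) * m : ℕ) : ℝ) ≤ ((P * (P * c + 1) : ℕ) : ℝ) * sch.commCost := by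
          have := mul_le_mul_of_nonneg_left hm' (by positivity : (0 : ℝ) ≤ P * c + 1)
          push_cast
          linarith
      _ ≤ g * sch.commCost := by gcongr
      _ ≤ sch.work + g * sch.commCost := le_add_of_nonneg_left (Nat.cast_nonneg _)
  · push Not at hsplit
    have hall : ∀ w, Sum.inr w ∈ sch.computedOn p := fun w => by
      obtain ⟨q, hq⟩ := hval.exists_mem_computedOn (Sum.inr w)
      by_cases hqp : q = p
      · exact hqp ▸ hq
      · exact absurd hq (hsplit w q hqp)
    have hcount := card_le_card_computedOn_add_card_delivered hval hall w₀
    have hwork := sch.card_computedOn_le_work p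
    calc (((P * c + 1) * m : ℕ) : ℝ) ≤ sch.work + P * sch.commCost := by
          exact_mod_cast hcount.trans (Nat.add_le_add hwork hcomm)
      _ ≤ sch.work + g * sch.commCost := by gcongr

def replicated (P m c : ℕ) : BSPSchedule (DNode P m c) P 1 where
  comp p _ := univ.map Function.Embedding.inl ∪
    univ.map ((Function.Embedding.sectR p _).trans Function.Embedding.inr)
  comm _ _ := ∅

theorem replicated_valid (hP : 0 < P) : (replicated P m c).Valid (DEdge P m c) := by
  refine ⟨?_, fun _ _ _ hx => by simp [replicated] at hx, ?_⟩
  · rintro p s v - (u | w) ⟨hu, -⟩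
    · exact Or.inl ⟨s, le_rfl, by simp [replicated]⟩
    · simp at hu
  · rintro (u | ⟨p, j⟩)
    · exact ⟨⟨0, hP⟩, 0, by simp [replicated]⟩
    · exact ⟨p, 0, by simp [replicated]⟩

theorem replicated_cost_le (g : ℝ) :
    (replicated P m c).cost g 0 ≤ (((c + 1) * m : ℕ) : ℝ) := by
  have hcomm : (replicated P m c).commCost = 0 := by
    simp [commCost, received, replicated]
  have hcomp : ∀ p s, ((replicated P m c).comp p s).card ≤ (c + 1) * m := fun p s =>
    (card_union_le _ _).trans_eq <| by simp [add_mul, add_comm]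
  have hwork : (replicated P m c).work ≤ (c + 1) * m := by
    simpa [work] using fun p => hcomp p 0
  rw [cost_zero_eq, hcomm, Nat.cast_zero, mul_zero, add_zero]
  exact_mod_cast hwork

end DNode

/-- For all integers `P ≥ 2`, `m ≥ 1`, `c ≥ 1`, with parameters `L = 0` and any
real `g > P·(P·c + 1)`, the minimum cost of a valid non-replicating BSP schedule of the DAG
`D(P, m, c)` with `P` processors (over all numbers of supersteps `S ≥ 1`) is at least
`((P·c + 1)/(c + 1))` times the minimum cost of a valid BSP schedule of `D(P, m, c)` with `P`
processors (over all `S ≥ 1`); consequently, allowing replication reduces the optimal BSP cost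
of `D(P, m, c)` by a factor of at least `(P·c + 1)/(c + 1)`. -/
theorem stmt14 (P m c : ℕ) (hP : 2 ≤ P) (hm : 1 ≤ m) (hc : 1 ≤ c)
    (g : ℝ) (hg : ((P * (P * c + 1) : ℕ) : ℝ) < g) :
    (((P * c + 1 : ℕ) : ℝ) / ((c + 1 : ℕ) : ℝ)) *
      sInf {x : ℝ | ∃ S : ℕ, 1 ≤ S ∧ ∃ sch : BSPSchedule (DNode P m c) P S,
        sch.Valid (DEdge P m c) ∧ sch.cost g 0 = x} ≤
    sInf {x : ℝ | ∃ S : ℕ, 1 ≤ S ∧ ∃ sch : BSPSchedule (DNode P m c) P S,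
      sch.Valid (DEdge P m c) ∧ sch.NonReplicating ∧ sch.cost g 0 = x} := by
  have hP₀ : 0 < P := by omega
  have hg₀ : (0 : ℝ) ≤ g := (Nat.cast_nonneg _).trans hg.le
  have hopt_le : sInf {x : ℝ | ∃ S : ℕ, 1 ≤ S ∧ ∃ sch : BSPSchedule (DNode P m c) P S,
      sch.Valid (DEdge P m c) ∧ sch.cost g 0 = x} ≤ (((c + 1) * m : ℕ) : ℝ) :=
    csInf_le_of_le ⟨0, by rintro x ⟨S, -, sch, -, rfl⟩; exact sch.cost_nonneg hg₀ le_rfl⟩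
      ⟨1, le_rfl, DNode.replicated P m c, DNode.replicated_valid hP₀, rfl⟩
      (DNode.replicated_cost_le g)
  have hle_optNR : (((P * c + 1) * m : ℕ) : ℝ) ≤ sInf {x : ℝ | ∃ S : ℕ, 1 ≤ S ∧
      ∃ sch : BSPSchedule (DNode P m c) P S,
        sch.Valid (DEdge P m c) ∧ sch.NonReplicating ∧ sch.cost g 0 = x} :=
    le_csInf ⟨_, 1, le_rfl, BSPSchedule.sequential ⟨0, hP₀⟩,
        BSPSchedule.sequential_valid _ _, BSPSchedule.sequential_nonReplicating _, rfl⟩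
      (by
        rintro x ⟨S, -, sch, hval, hnr, rfl⟩
        exact DNode.cost_ge_of_nonReplicating hP₀ hm hc hg.le hval hnr)
  calc _ ≤ ((P * c + 1 : ℕ) : ℝ) / ((c + 1 : ℕ) : ℝ) * (((c + 1) * m : ℕ) : ℝ) := by gcongr
    _ = (((P * c + 1) * m : ℕ) : ℝ) := by field_simp; push_cast; ring
    _ ≤ _ := hle_optNR
end
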